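/- arXiv:2304.05737 — 5 statements merged into one kernel-verified Lean document; each statement's English description precedes it below -/
import Mathlib

section
/- The q,t-dimension of the charged free fermion Fock space equals the product side of the Jacobi triple product: the sum over m in ℤ of t^m q^{m²/2} times the product over j ≥ 1 of 1/(1-q^j) equals the product over half-integers j ∈ 1/2 + ℤ_{≥0} of (1 + t q^j)(1 + t^{-1} q^j). Precisely, as formal power series identity: ∑_{m∈ℤ} t^m q^{m²/2} ∏_{j≥1} (1-q^j)^{-1} = ∏_{j≥0} (1 + t q^{j+1/2})(1 + t^{-1} q^{j+1/2}). -/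
/-!
STATEMENT 0: The Jacobi triple product identity,
∑_{m∈ℤ} t^m q^{m²/2} ∏_{j≥1} (1-q^j)^{-1}
  = ∏_{j≥0} (1 + t q^{j+1/2})(1 + t^{-1} q^{j+1/2}),
stated as an identity of formal Laurent series in `t` whose coefficients are
formal power series in `q^{1/2}`.  We work in `PowerSeries R` where
`R = LaurentPolynomial ℚ` (Laurent polynomials in `t`), the power series
variable `X` playing the role of `q^{1/2}` (so `q^j = X^(2j)`).  Infinite sums
and products are taken with respect to the product (coefficientwise discrete)
topology on power series.
-/

open PowerSeries

noncomputable section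

abbrev R : Type := LaurentPolynomial ℚ

instance : TopologicalSpace R := ⊥

instance : TopologicalSpace (PowerSeries R) :=
  inferInstanceAs (TopologicalSpace ((Unit →₀ ℕ) → R))

instance : DiscreteTopology R := ⟨rfl⟩

instance : T2Space (PowerSeries R) :=
  inferInstanceAs (T2Space ((Unit →₀ ℕ) → R))

lemma coeff_apply' (φ : PowerSeries R) (d : Unit →₀ ℕ) :
    φ d = coeff (d ()) φ := by
  have : d = Finsupp.single () (d ()) := by
    conv_lhs => rw [Finsupp.unique_single d]
  rw [this, PowerSeries.coeff_def (s := Finsupp.single () (d ())) rfl]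
  exact (MvPowerSeries.coeff_apply (σ := Unit) (R := R) φ _).symm

lemma tendsto_powerSeries {ι : Type*} (F : Filter ι) (f : ι → PowerSeries R)
    (g : PowerSeries R) (h : ∀ d : ℕ, ∀ᶠ i in F, coeff d (f i) = coeff d g) :
    Filter.Tendsto f F (nhds g) := by
  rw [show (nhds g : Filter (PowerSeries R)) = nhds (g : (Unit →₀ ℕ) → R) from rfl]
  apply tendsto_pi_nhds.mpr
  intro d
  rw [show (nhds (g d) : Filter R) = pure (g d) from (nhds_discrete R) ▸ rfl]
  rw [Filter.tendsto_pure]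
  filter_upwards [h (d ())] with i hi
  rw [coeff_apply' (f i), coeff_apply' g, hi]

lemma X_pow_dvd_prod_sub_one {c : ℕ} (t : Finset ℕ) (f : ℕ → PowerSeries R)
    (h : ∀ i ∈ t, (X : PowerSeries R)^c ∣ f i - 1) :
    (X : PowerSeries R)^c ∣ (∏ i ∈ t, f i) - 1 := by
  classical
  induction t using Finset.cons_induction with
  | empty => simp
  | cons a s ha ih =>
    rw [Finset.prod_cons]
    have h1 : (X : PowerSeries R)^c ∣ f a - 1 := h a (Finset.mem_cons_self a s)
    have h2 : (X : PowerSeries R)^c ∣ (∏ i ∈ s, f i) - 1 :=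
      ih fun i hi => h i (Finset.mem_cons_of_mem hi)
    have : f a * ∏ i ∈ s, f i - 1 = (f a - 1) * ∏ i ∈ s, f i + ((∏ i ∈ s, f i) - 1) := by
      ring
    rw [this]
    exact dvd_add (h1.mul_right _) h2

lemma coeff_eq_of_sub_dvd {d : ℕ} {u v : PowerSeries R}
    (h : (X : PowerSeries R)^(d+1) ∣ u - v) : coeff d u = coeff d v := by
  have := (PowerSeries.X_pow_dvd_iff.mp h) d (Nat.lt_succ_self d)
  rw [map_sub] at this
  exact sub_eq_zero.mp this

lemma coeff_mul_eq_of_dvd {d : ℕ} {u v : PowerSeries R}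
    (h : (X : PowerSeries R)^(d+1) ∣ u - 1) : coeff d (u * v) = coeff d v := by
  apply coeff_eq_of_sub_dvd
  have : u * v - v = (u - 1) * v := by ring
  rw [this]
  exact h.mul_right _

lemma coeff_prod_subset {f : ℕ → PowerSeries R}
    (hf : ∀ j, (X : PowerSeries R)^(j+1) ∣ f j - 1) {d : ℕ} {s : Finset ℕ}
    (hs : Finset.range (d+1) ⊆ s) :
    coeff d (∏ i ∈ s, f i) = coeff d (∏ i ∈ Finset.range (d+1), f i) := by
  rw [← Finset.prod_sdiff hs]
  apply coeff_mul_eq_of_dvd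
  apply X_pow_dvd_prod_sub_one
  intro i hi
  rcases Finset.mem_sdiff.mp hi with ⟨_, hi2⟩
  have : d + 1 ≤ i + 1 := by
    have := Finset.mem_range.not.mp hi2
    omega
  exact dvd_trans (pow_dvd_pow _ this) (hf i)

lemma hasProd_of_one_sub {f : ℕ → PowerSeries R}
    (hf : ∀ j, (X : PowerSeries R)^(j+1) ∣ f j - 1) :
    HasProd f (PowerSeries.mk fun d => coeff d (∏ i ∈ Finset.range (d+1), f i)) := by
  apply tendsto_powerSeries
  intro d
  rw [SummationFilter.unconditional_filter, Filter.eventually_atTop]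
  refine ⟨Finset.range (d+1), fun s hs => ?_⟩
  rw [coeff_prod_subset hf hs, PowerSeries.coeff_mk]

lemma coeff_tprod {f : ℕ → PowerSeries R}
    (hf : ∀ j, (X : PowerSeries R)^(j+1) ∣ f j - 1) {d N : ℕ} (h : d < N) :
    coeff d (∏' j, f j) = coeff d (∏ i ∈ Finset.range N, f i) := by
  rw [(hasProd_of_one_sub hf).tprod_eq, PowerSeries.coeff_mk]
  exact (coeff_prod_subset hf (Finset.range_subset_range.mpr h)).symm

def jterm (m : ℤ) : PowerSeries R := C (LaurentPolynomial.T m : R) * (X : PowerSeries R) ^ (m ^ 2).toNat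

lemma coeff_jterm {d : ℕ} {m : ℤ} (h : (m ^ 2).toNat ≠ d) : coeff d (jterm m) = 0 := by
  rw [jterm, PowerSeries.coeff_C_mul, PowerSeries.coeff_X_pow, if_neg (Ne.symm h), mul_zero]

lemma coeff_jterm_zero_of_gt {d : ℕ} {m : ℤ} (h : (d : ℤ) < |m|) : coeff d (jterm m) = 0 := by
  apply coeff_jterm
  have h2 : (d : ℤ) < m ^ 2 := by nlinarith [abs_nonneg m, sq_abs m]
  omega

lemma coeff_jsum_subset {d : ℕ} {s : Finset ℤ}
    (hs : Finset.Icc (-(d:ℤ)) (d:ℤ) ⊆ s) :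
    coeff d (∑ m ∈ s, jterm m) = coeff d (∑ m ∈ Finset.Icc (-(d:ℤ)) (d:ℤ), jterm m) := by
  rw [map_sum, map_sum]
  apply (Finset.sum_subset hs ?_).symm
  intro m _ hm
  apply coeff_jterm_zero_of_gt
  rw [Finset.mem_Icc] at hm
  rcases abs_cases m with ⟨h1, _⟩ | ⟨h1, _⟩ <;> omega

lemma hasSum_jterm :
    HasSum jterm (PowerSeries.mk fun d => coeff d (∑ m ∈ Finset.Icc (-(d:ℤ)) (d:ℤ), jterm m)) := by
  apply tendsto_powerSeries
  intro d
  rw [SummationFilter.unconditional_filter, Filter.eventually_atTop]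
  refine ⟨Finset.Icc (-(d:ℤ)) (d:ℤ), fun s hs => ?_⟩
  rw [coeff_jsum_subset hs, PowerSeries.coeff_mk]

lemma coeff_jtsum {d N : ℕ} (h : d ≤ N) :
    coeff d (∑' m, jterm m) = coeff d (∑ m ∈ Finset.Icc (-(N:ℤ)) (N:ℤ), jterm m) := by
  rw [hasSum_jterm.tsum_eq, PowerSeries.coeff_mk]
  apply (coeff_jsum_subset ?_).symm
  apply Finset.Icc_subset_Icc <;> omega

def Bq : ℕ → ℕ → PowerSeries R
  | 0, 0 => 1
  | 0, _+1 => 0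
  | _+1, 0 => 1
  | n+1, k+1 => Bq n k + (X : PowerSeries R)^(2*(k+1)) * Bq n (k+1)

lemma Bq_zero_zero : Bq 0 0 = 1 := rfl
lemma Bq_zero_right (n : ℕ) : Bq n 0 = 1 := by cases n <;> rfl
lemma Bq_succ_succ (n k : ℕ) :
    Bq (n+1) (k+1) = Bq n k + (X : PowerSeries R)^(2*(k+1)) * Bq n (k+1) := rfl

lemma Bq_zero_of_lt : ∀ {n k : ℕ}, n < k → Bq n k = 0 := by
  intro n
  induction n with
  | zero => intro k hk; match k, hk with | (j+1), _ => rfl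
  | succ m ih =>
    intro k hk
    match k, hk with
    | (j+1), hk =>
      rw [Bq_succ_succ, ih (by omega), ih (by omega), mul_zero, add_zero]

lemma Bq_one (n : ℕ) : Bq n 1 = ∑ i ∈ Finset.range n, (X : PowerSeries R)^(2*i) := by
  induction n with
  | zero => rw [show Bq 0 1 = 0 from rfl]; simp
  | succ m ih =>
    rw [Bq_succ_succ, Bq_zero_right, ih, Finset.mul_sum, Finset.sum_range_succ']
    have h1 : ∀ i ∈ Finset.range m, (X : PowerSeries R) ^ (2*(0+1)) * (X : PowerSeries R)^(2*i)
        = (X : PowerSeries R)^(2*(i+1)) := by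
      intro i _
      rw [← pow_add]
      congr 1
      omega
    rw [Finset.sum_congr rfl h1]
    rw [mul_zero, pow_zero]
    ring

lemma Bq_pascal2 : ∀ n k : ℕ, k ≤ n →
    Bq (n+1) (k+1) = (X : PowerSeries R)^(2*(n-k)) * Bq n k + Bq n (k+1) := by
  intro n
  induction n with
  | zero =>
    intro k hk
    interval_cases k
    rw [Bq_succ_succ]
    simp [Bq_zero_zero, show Bq 0 1 = 0 from rfl]
  | succ m ih =>
    intro k hk
    match k with
    | 0 =>
      rw [Bq_succ_succ, Bq_zero_right, Bq_one, Nat.sub_zero, mul_one, Finset.mul_sum]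
      have h1 : ∀ i ∈ Finset.range (m+1), (X : PowerSeries R) ^ (2*(0+1)) * (X : PowerSeries R)^(2*i)
          = (X : PowerSeries R)^(2*(i+1)) := by
        intro i _
        rw [← pow_add]
        congr 1
        omega
      rw [Finset.sum_congr rfl h1]
      have l1 : (1 : PowerSeries R) + ∑ i ∈ Finset.range (m+1), (X : PowerSeries R)^(2*(i+1))
          = ∑ i ∈ Finset.range (m+2), (X : PowerSeries R)^(2*i) := by
        rw [Finset.sum_range_succ' (fun i => (X : PowerSeries R)^(2*i)) (m+1), mul_zero, pow_zero]
        exact add_comm 1 _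
      have l2 : (X : PowerSeries R)^(2*(m+1)) + ∑ i ∈ Finset.range (m+1), (X : PowerSeries R)^(2*i)
          = ∑ i ∈ Finset.range (m+2), (X : PowerSeries R)^(2*i) := by
        rw [Finset.sum_range_succ (fun i => (X : PowerSeries R)^(2*i)) (m+1)]
        ring
      rw [l1, l2]
      try ring
    | (j+1) =>
      rcases Nat.lt_or_ge j m with hj | hj
      · have hj1 : j ≤ m := by omega
        have L : Bq (m+2) (j+2) =
            ((X : PowerSeries R)^(2*(m-j)) * Bq m j + Bq m (j+1))
              + (X : PowerSeries R)^(2*(j+2)) * ((X : PowerSeries R)^(2*(m-(j+1))) * Bq m (j+1) + Bq m (j+2)) := by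
          rw [Bq_succ_succ, ih j hj1, ih (j+1) (by omega)]
        have Rr : (X : PowerSeries R)^(2*(m+1-(j+1))) * Bq (m+1) (j+1) + Bq (m+1) (j+2) =
            (X : PowerSeries R)^(2*(m-j)) * (Bq m j + (X : PowerSeries R)^(2*(j+1)) * Bq m (j+1))
              + (Bq m (j+1) + (X : PowerSeries R)^(2*(j+2)) * Bq m (j+2)) := by
          rw [Bq_succ_succ, Bq_succ_succ]
          congr 3
          omega
        rw [show j + 1 + 1 = j + 2 from rfl, L, Rr]
        have hx : (X : PowerSeries R)^(2*(j+2)) * (X : PowerSeries R)^(2*(m-(j+1)))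
            = (X : PowerSeries R)^(2*(m-j)) * (X : PowerSeries R)^(2*(j+1)) := by
          rw [← pow_add, ← pow_add]
          congr 1
          omega
        linear_combination hx * Bq m (j+1)
      · have hjm : j = m := by omega
        rw [hjm]
        have z1 : Bq (m+1) (m+2) = 0 := Bq_zero_of_lt (by omega)
        have e : Bq (m+1+1) (m+1+1) = Bq (m+1) (m+1) + (X : PowerSeries R)^(2*(m+1+1)) * Bq (m+1) (m+1+1) :=
          Bq_succ_succ (m+1) (m+1)
        rw [e, show m+1+1 = m+2 from rfl, z1, Nat.sub_self, pow_zero]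
        ring

lemma Bq_prod_formula : ∀ n k : ℕ, k ≤ n →
    Bq n k * ∏ i ∈ Finset.range k, (1 - (X : PowerSeries R)^(2*(i+1)))
      = ∏ i ∈ Finset.range k, (1 - (X : PowerSeries R)^(2*(n-i))) := by
  intro n
  induction n with
  | zero =>
    intro k hk
    interval_cases k
    simp [Bq_zero_zero]
  | succ n ih =>
    intro k hk
    match k with
    | 0 => simp [Bq_zero_right]
    | (j+1) =>
      have htgt : ∏ i ∈ Finset.range (j+1), (1 - (X : PowerSeries R)^(2*(n+1-i)))
          = (∏ i ∈ Finset.range j, (1 - (X : PowerSeries R)^(2*(n-i)))) * (1 - (X : PowerSeries R)^(2*(n+1))) := by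
        rw [Finset.prod_range_succ' (fun i => 1 - (X : PowerSeries R)^(2*(n+1-i))) j]
        have e1 : ∀ i ∈ Finset.range j, (1 - (X : PowerSeries R)^(2*(n+1-(i+1)))) = (1 - (X : PowerSeries R)^(2*(n-i))) := by
          intro i _
          congr 3
          omega
        rw [Finset.prod_congr rfl e1, Nat.sub_zero]
      rcases Nat.lt_or_ge j n with hj | hj
      · have h1 : j ≤ n := by omega
        have h2 : j + 1 ≤ n := by omega
        have ihj := ih j h1
        have ihj1 := ih (j+1) h2
        rw [Finset.prod_range_succ (fun i => 1 - (X : PowerSeries R)^(2*(i+1))) j] at ihj1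
        rw [Finset.prod_range_succ (fun i => 1 - (X : PowerSeries R)^(2*(n-i))) j] at ihj1
        have hx : (X : PowerSeries R)^(2*(j+1)) * (X : PowerSeries R)^(2*(n-j)) = (X : PowerSeries R)^(2*(n+1)) := by
          rw [← pow_add]
          congr 1
          omega
        rw [Bq_succ_succ, htgt,
          Finset.prod_range_succ (fun i => 1 - (X : PowerSeries R)^(2*(i+1))) j]
        linear_combination (1 - (X : PowerSeries R)^(2*(j+1))) * ihj
          + (X : PowerSeries R)^(2*(j+1)) * ihj1
          - (∏ i ∈ Finset.range j, (1 - (X : PowerSeries R)^(2*(n-i)))) * hx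
      · have hjn : j = n := by omega
        rw [hjn] at htgt ⊢
        rw [Bq_succ_succ, Bq_zero_of_lt (show n < n+1 by omega), mul_zero, add_zero, htgt,
          Finset.prod_range_succ (fun i => 1 - (X : PowerSeries R)^(2*(i+1))) n, ← mul_assoc,
          ih n le_rfl]

def tC (m : ℤ) : PowerSeries R := C (LaurentPolynomial.T m : R)

lemma tC_mul (a b : ℤ) : tC a * tC b = tC (a+b) := by
  rw [tC, tC, tC, LaurentPolynomial.T_add, map_mul]

def cN (N k : ℕ) : PowerSeries R :=
  tC ((k:ℤ) - N) * (X : PowerSeries R)^((Nat.dist k N)^2) * Bq (2*N) k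

lemma dist_sq_int (a b : ℕ) : ((Nat.dist a b : ℤ))^2 = ((a:ℤ) - b)^2 := by
  rcases le_total a b with h | h
  · rw [Nat.dist_eq_sub_of_le h]
    push_cast [h]
    ring
  · rw [Nat.dist_eq_sub_of_le_right h]
    push_cast [h]
    ring

lemma Bq_boundary1 (n : ℕ) :
    Bq (n+2) 1 = 1 + (X : PowerSeries R)^(2*(n+1)) + (X : PowerSeries R)^2 * Bq n 1 := by
  rw [Bq_one, Bq_one, Finset.mul_sum, Finset.sum_range_succ (fun i => (X : PowerSeries R)^(2*i)) (n+1),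
    Finset.sum_range_succ' (fun i => (X : PowerSeries R)^(2*i)) n]
  have h1 : ∀ i ∈ Finset.range n, (X : PowerSeries R)^2 * (X : PowerSeries R)^(2*i) = (X : PowerSeries R)^(2*(i+1)) := by
    intro i _
    rw [← pow_add]
    congr 1
    omega
  rw [Finset.sum_congr rfl h1]
  ring_nf

lemma Bq_step (N k : ℕ) (hk : k ≤ 2*N) :
    Bq (2*N+2) (k+2) = (X : PowerSeries R)^(2*(2*N-k)) * Bq (2*N) k
      + (1 + (X : PowerSeries R)^(2*(2*N+1))) * Bq (2*N) (k+1)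
      + (X : PowerSeries R)^(2*(k+2)) * Bq (2*N) (k+2) := by
  have p2 := Bq_pascal2 (2*N+1) (k+1) (by omega)
  have d1 : Bq (2*N+1) (k+1) = Bq (2*N) k + (X : PowerSeries R)^(2*(k+1)) * Bq (2*N) (k+1) :=
    Bq_succ_succ (2*N) k
  have d2 : Bq (2*N+1) (k+2) = Bq (2*N) (k+1) + (X : PowerSeries R)^(2*(k+2)) * Bq (2*N) (k+2) :=
    Bq_succ_succ (2*N) (k+1)
  have hx : (X : PowerSeries R)^(2*(2*N+1-(k+1))) * (X : PowerSeries R)^(2*(k+1)) = (X : PowerSeries R)^(2*(2*N+1)) := by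
    rw [← pow_add]
    congr 1
    omega
  have hx2 : (2*(2*N+1-(k+1))) = 2*(2*N-k) := by omega
  rw [show 2*N+1+1 = 2*N+2 from rfl] at p2
  rw [p2, d1, d2, hx2]
  have hx' : (X : PowerSeries R)^(2*(2*N-k)) * (X : PowerSeries R)^(2*(k+1)) = (X : PowerSeries R)^(2*(2*N+1)) := by
    rw [← pow_add]
    congr 1
    omega
  linear_combination Bq (2*N) (k+1) * hx'

lemma cN_A (N : ℕ) : cN (N+1) 0 = cN N 0 * tC (-1) * (X : PowerSeries R)^(2*N+1) := by
  simp only [cN]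
  rw [Bq_zero_right, Bq_zero_right]
  have hx : (X : PowerSeries R)^((Nat.dist 0 (N+1))^2) = (X : PowerSeries R)^((Nat.dist 0 N)^2) * (X : PowerSeries R)^(2*N+1) := by
    rw [← pow_add]
    congr 1
    rw [Nat.dist_zero_left, Nat.dist_zero_left]
    ring
  have htc : tC ((0:ℕ) - (N:ℤ)) * tC (-1) = tC (((0:ℕ):ℤ) - ((N+1:ℕ):ℤ)) := by
    rw [tC_mul]
    congr 1
    push_cast
    ring
  rw [hx, ← htc]
  ring

lemma cN_B (N : ℕ) : cN (N+1) 1 = cN N 0 * (1 + (X : PowerSeries R)^(2*(2*N+1)))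
    + cN N 1 * tC (-1) * (X : PowerSeries R)^(2*N+1) := by
  simp only [cN]
  rw [Bq_zero_right]
  have hd1 : Nat.dist 1 (N+1) = Nat.dist 0 N := by
    rw [Nat.dist_succ_succ]
  have hBq : Bq (2*(N+1)) 1 = 1 + (X : PowerSeries R)^(2*(2*N+1)) + (X : PowerSeries R)^2 * Bq (2*N) 1 := by
    rw [show 2*(N+1) = 2*N+2 from by omega]
    exact Bq_boundary1 (2*N)
  have hx : (X : PowerSeries R)^((Nat.dist 1 N)^2) * (X : PowerSeries R)^(2*N+1)
      = (X : PowerSeries R)^((Nat.dist 0 N)^2) * (X : PowerSeries R)^2 := by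
    rw [← pow_add, ← pow_add]
    congr 1
    apply Nat.cast_inj (R := ℤ) |>.mp
    push_cast
    rw [dist_sq_int, dist_sq_int]
    ring
  have htc : tC ((1:ℕ) - (N:ℤ)) * tC (-1) = tC (((0:ℕ):ℤ) - ((N:ℕ):ℤ)) := by
    rw [tC_mul]
    congr 1
    push_cast
    ring
  have ht2 : tC (((1:ℕ):ℤ) - ((N+1:ℕ):ℤ)) = tC (((0:ℕ):ℤ) - ((N:ℕ):ℤ)) := by
    congr 1
    push_cast
    ring
  rw [hBq, hd1, ht2]
  linear_combination (-(tC (((0:ℕ):ℤ) - ((N:ℕ):ℤ)) * Bq (2*N) 1)) * hx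
    - (Bq (2*N) 1 * (X : PowerSeries R)^((Nat.dist 1 N)^2) * (X : PowerSeries R)^(2*N+1)) * htc

lemma cN_C (N k : ℕ) (hk : k ≤ 2*N) :
    cN (N+1) (k+2) = cN N k * tC 1 * (X : PowerSeries R)^(2*N+1)
      + cN N (k+1) * (1 + (X : PowerSeries R)^(2*(2*N+1)))
      + cN N (k+2) * tC (-1) * (X : PowerSeries R)^(2*N+1) := by
  simp only [cN]
  rw [show 2*(N+1) = 2*N+2 from by omega, Bq_step N k hk]
  have e2 : (Nat.dist (k+1) N)^2 = (Nat.dist (k+2) (N+1))^2 := by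
    rw [Nat.dist_succ_succ]
  rw [e2]
  have hx1 : (X : PowerSeries R)^((Nat.dist (k+2) (N+1))^2) * (X : PowerSeries R)^(2*(2*N-k))
      = (X : PowerSeries R)^((Nat.dist k N)^2) * (X : PowerSeries R)^(2*N+1) := by
    rw [← pow_add, ← pow_add]
    congr 1
    apply Nat.cast_inj (R := ℤ) |>.mp
    push_cast [Nat.cast_sub (show k ≤ 2*N from hk)]
    rw [dist_sq_int, dist_sq_int]
    push_cast
    ring
  have hx3 : (X : PowerSeries R)^((Nat.dist (k+2) (N+1))^2) * (X : PowerSeries R)^(2*(k+2))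
      = (X : PowerSeries R)^((Nat.dist (k+2) N)^2) * (X : PowerSeries R)^(2*N+1) := by
    rw [← pow_add, ← pow_add]
    congr 1
    apply Nat.cast_inj (R := ℤ) |>.mp
    push_cast
    rw [dist_sq_int, dist_sq_int]
    push_cast
    ring
  have t1 : tC ((k:ℤ) - N) * tC 1 = tC (((k+2:ℕ):ℤ) - ((N+1:ℕ):ℤ)) := by
    rw [tC_mul]
    congr 1
    push_cast
    ring
  have t2 : tC (((k+1:ℕ):ℤ) - N) = tC (((k+2:ℕ):ℤ) - ((N+1:ℕ):ℤ)) := by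
    congr 1
    push_cast
    ring
  have t3 : tC (((k+2:ℕ):ℤ) - N) * tC (-1) = tC (((k+2:ℕ):ℤ) - ((N+1:ℕ):ℤ)) := by
    rw [tC_mul]
    congr 1
    push_cast
    ring
  rw [t2]
  linear_combination (tC (((k+2:ℕ):ℤ) - ((N+1:ℕ):ℤ)) * Bq (2*N) k) * hx1
    - ((X : PowerSeries R)^((Nat.dist k N)^2) * (X : PowerSeries R)^(2*N+1) * Bq (2*N) k) * t1
    + (tC (((k+2:ℕ):ℤ) - ((N+1:ℕ):ℤ)) * Bq (2*N) (k+2)) * hx3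
    - ((X : PowerSeries R)^((Nat.dist (k+2) N)^2) * (X : PowerSeries R)^(2*N+1) * Bq (2*N) (k+2)) * t3

def jfR (j : ℕ) : PowerSeries R :=
  (1 + tC 1 * (X : PowerSeries R)^(2*j+1)) * (1 + tC (-1) * (X : PowerSeries R)^(2*j+1))

lemma cN_zero_of_lt {N k : ℕ} (h : 2*N < k) : cN N k = 0 := by
  rw [cN, Bq_zero_of_lt h, mul_zero]

lemma jtpFin (N : ℕ) :
    ∏ j ∈ Finset.range N, jfR j = ∑ k ∈ Finset.range (2*N+1), cN N k := by
  induction N with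
  | zero =>
    simp [cN, tC, Bq_zero_zero]
  | succ N ih =>
    rw [Finset.prod_range_succ, ih]
    have h1 : tC 1 * tC (-1) = 1 := by
      rw [tC_mul]
      norm_num
      rw [tC, LaurentPolynomial.T_zero, map_one]
    have hxx : (X : PowerSeries R)^(2*N+1) * (X : PowerSeries R)^(2*N+1) = (X : PowerSeries R)^(2*(2*N+1)) := by
      rw [← pow_add]
      congr 1
      omega
    have hG : jfR N = 1 + (X : PowerSeries R)^(2*(2*N+1)) + tC 1 * (X : PowerSeries R)^(2*N+1)
        + tC (-1) * (X : PowerSeries R)^(2*N+1) := by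
      rw [jfR]
      linear_combination ((X : PowerSeries R)^(2*N+1) * (X : PowerSeries R)^(2*N+1)) * h1 + hxx
    rw [hG]
    have hzero1 : cN N (2*N+1) = 0 := cN_zero_of_lt (by omega)
    have hzero2 : cN N (2*N+2) = 0 := cN_zero_of_lt (by omega)
    -- abbreviations
    set Q' : PowerSeries R := (X : PowerSeries R)^(2*(2*N+1)) with hQ'
    set x : PowerSeries R := (X : PowerSeries R)^(2*N+1) with hx
    -- S2 rearrangement
    have hS2 : ∑ k ∈ Finset.range (2*N+1), cN N k * (1+Q')
        = cN N 0 * (1+Q') + ∑ k ∈ Finset.range (2*N+1), cN N (k+1) * (1+Q') := by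
      have A1 : ∑ k ∈ Finset.range (2*N+2), cN N k * (1+Q')
          = ∑ k ∈ Finset.range (2*N+1), cN N k * (1+Q') := by
        rw [Finset.sum_range_succ, hzero1, zero_mul, add_zero]
      have A2 : ∑ k ∈ Finset.range (2*N+2), cN N k * (1+Q')
          = (∑ k ∈ Finset.range (2*N+1), cN N (k+1) * (1+Q')) + cN N 0 * (1+Q') :=
        Finset.sum_range_succ' (fun k => cN N k * (1+Q')) (2*N+1)
      rw [← A1, A2]
      ring
    -- S3 rearrangement
    have hS3 : ∑ k ∈ Finset.range (2*N+1), cN N k * tC (-1) * x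
        = cN N 0 * tC (-1) * x + cN N 1 * tC (-1) * x
          + ∑ k ∈ Finset.range (2*N+1), cN N (k+2) * tC (-1) * x := by
      have A1 : ∑ k ∈ Finset.range (2*N+3), cN N k * tC (-1) * x
          = ∑ k ∈ Finset.range (2*N+1), cN N k * tC (-1) * x := by
        rw [Finset.sum_range_succ, Finset.sum_range_succ, hzero1, hzero2]
        simp
      have A2 : ∑ k ∈ Finset.range (2*N+3), cN N k * tC (-1) * x
          = (∑ k ∈ Finset.range (2*N+2), cN N (k+1) * tC (-1) * x) + cN N 0 * tC (-1) * x :=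
        Finset.sum_range_succ' (fun k => cN N k * tC (-1) * x) (2*N+2)
      have A3 : ∑ k ∈ Finset.range (2*N+2), cN N (k+1) * tC (-1) * x
          = (∑ k ∈ Finset.range (2*N+1), cN N (k+1+1) * tC (-1) * x) + cN N (0+1) * tC (-1) * x :=
        Finset.sum_range_succ' (fun k => cN N (k+1) * tC (-1) * x) (2*N+1)
      rw [← A1, A2, A3]
      norm_num
      ring
    -- RHS decomposition
    have hR : ∑ k ∈ Finset.range (2*(N+1)+1), cN (N+1) k
        = cN (N+1) 0 + cN (N+1) 1
          + ∑ k ∈ Finset.range (2*N+1), cN (N+1) (k+2) := by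
      rw [show 2*(N+1)+1 = 2*N+3 from by omega]
      rw [Finset.sum_range_succ' (cN (N+1)) (2*N+2),
        Finset.sum_range_succ' (fun k => cN (N+1) (k+1)) (2*N+1)]
      norm_num
      ring
    rw [hR]
    -- expand product
    have expand : (∑ k ∈ Finset.range (2*N+1), cN N k) * (1 + Q' + tC 1 * x + tC (-1) * x)
        = (∑ k ∈ Finset.range (2*N+1), cN N k * (1+Q'))
          + (∑ k ∈ Finset.range (2*N+1), cN N k * tC 1 * x)
          + (∑ k ∈ Finset.range (2*N+1), cN N k * tC (-1) * x) := by
      rw [Finset.sum_mul]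
      rw [← Finset.sum_add_distrib, ← Finset.sum_add_distrib]
      apply Finset.sum_congr rfl
      intro k _
      ring
    rw [expand, hS2, hS3]
    have main : ∑ k ∈ Finset.range (2*N+1), cN (N+1) (k+2)
        = (∑ k ∈ Finset.range (2*N+1), cN N k * tC 1 * x)
          + (∑ k ∈ Finset.range (2*N+1), cN N (k+1) * (1+Q'))
          + (∑ k ∈ Finset.range (2*N+1), cN N (k+2) * tC (-1) * x) := by
      rw [← Finset.sum_add_distrib, ← Finset.sum_add_distrib]
      apply Finset.sum_congr rfl
      intro k hkmem
      have hk : k ≤ 2*N := by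
        have := Finset.mem_range.mp hkmem
        omega
      exact cN_C N k hk
    rw [main, cN_A, cN_B]
    ring

lemma toNat_sq_dist (k N : ℕ) : ((((k:ℤ) - N)^2).toNat) = (Nat.dist k N)^2 := by
  have h : ((k:ℤ) - N)^2 = (((Nat.dist k N)^2 : ℕ) : ℤ) := by
    push_cast
    rw [dist_sq_int]
  rw [h, Int.toNat_natCast]

lemma ineq_a (N k : ℕ) (hk : k ≤ 2*N) :
    2*N+1 ≤ (Nat.dist k N)^2 + (2*(2*N-k)+2) := by
  apply (Nat.cast_le (α := ℤ)).mp
  push_cast [Nat.cast_sub hk]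
  rw [dist_sq_int]
  nlinarith [sq_nonneg ((k:ℤ) - N - 1)]

lemma ineq_b (N k : ℕ) :
    2*N+1 ≤ (Nat.dist k N)^2 + (2*k+2) := by
  apply (Nat.cast_le (α := ℤ)).mp
  push_cast
  rw [dist_sq_int]
  nlinarith [sq_nonneg ((k:ℤ) - N + 1)]

lemma key_congruence (N : ℕ) :
    (X : PowerSeries R)^(2*N+1) ∣
      (∑ m ∈ Finset.Icc (-(N:ℤ)) (N:ℤ), jterm m)
        - (∏ j ∈ Finset.range N, jfR j) * ∏ i ∈ Finset.range (2*N), (1 - (X : PowerSeries R)^(2*(i+1))) := by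
  rw [jtpFin]
  -- reindex the Icc sum
  have hre : ∑ m ∈ Finset.Icc (-(N:ℤ)) (N:ℤ), jterm m
      = ∑ k ∈ Finset.range (2*N+1), jterm ((k:ℤ) - N) := by
    apply Finset.sum_nbij' (i := fun (m : ℤ) => (m + N).toNat) (j := fun (k : ℕ) => (k:ℤ) - N)
    · intro m hm
      rw [Finset.mem_Icc] at hm
      rw [Finset.mem_range]
      omega
    · intro k hk
      rw [Finset.mem_range] at hk
      rw [Finset.mem_Icc]
      omega
    · intro m hm
      rw [Finset.mem_Icc] at hm
      beta_reduce
      omega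
    · intro k hk
      rw [Finset.mem_range] at hk
      beta_reduce
      omega
    · intro m hm
      rw [Finset.mem_Icc] at hm
      beta_reduce
      have h' : (((m + (N:ℤ)).toNat : ℕ) : ℤ) - (N:ℤ) = m := by omega
      rw [h']
  rw [hre, Finset.sum_mul, ← Finset.sum_sub_distrib]
  apply Finset.dvd_sum
  intro k hkmem
  have hk : k ≤ 2*N := by
    have := Finset.mem_range.mp hkmem
    omega
  -- rewrite cN N k * D
  rw [cN]
  have hD : (∏ i ∈ Finset.range (2*N), (1 - (X : PowerSeries R)^(2*(i+1))))
      = (∏ i ∈ Finset.range k, (1 - (X : PowerSeries R)^(2*(i+1))))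
        * ∏ i ∈ Finset.Ico k (2*N), (1 - (X : PowerSeries R)^(2*(i+1))) :=
    (Finset.prod_range_mul_prod_Ico _ hk).symm
  have hBqD : Bq (2*N) k * ∏ i ∈ Finset.range k, (1 - (X : PowerSeries R)^(2*(i+1)))
      = ∏ i ∈ Finset.range k, (1 - (X : PowerSeries R)^(2*(2*N-i))) := Bq_prod_formula (2*N) k hk
  have hterm : jterm ((k:ℤ) - N) = tC ((k:ℤ) - N) * (X : PowerSeries R)^((Nat.dist k N)^2) := by
    rw [jterm, toNat_sq_dist, tC]
  set P1 : PowerSeries R := ∏ i ∈ Finset.range k, (1 - (X : PowerSeries R)^(2*(2*N-i))) with hP1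
  set P2 : PowerSeries R := ∏ i ∈ Finset.Ico k (2*N), (1 - (X : PowerSeries R)^(2*(i+1))) with hP2
  have step : tC ((k:ℤ) - N) * (X : PowerSeries R)^((Nat.dist k N)^2) * Bq (2*N) k
      * (∏ i ∈ Finset.range (2*N), (1 - (X : PowerSeries R)^(2*(i+1))))
      = tC ((k:ℤ) - N) * (X : PowerSeries R)^((Nat.dist k N)^2) * (P1 * P2) := by
    rw [hD]
    calc tC ((k:ℤ) - N) * (X : PowerSeries R)^((Nat.dist k N)^2) * Bq (2*N) k
        * ((∏ i ∈ Finset.range k, (1 - (X : PowerSeries R)^(2*(i+1)))) * P2)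
        = tC ((k:ℤ) - N) * (X : PowerSeries R)^((Nat.dist k N)^2)
          * ((Bq (2*N) k * ∏ i ∈ Finset.range k, (1 - (X : PowerSeries R)^(2*(i+1)))) * P2) := by ring
      _ = _ := by rw [hBqD]
  rw [step, hterm]
  -- difference = tC * X^e * (1 - P1*P2)
  have hdiff : tC ((k:ℤ) - N) * (X : PowerSeries R)^((Nat.dist k N)^2)
      - tC ((k:ℤ) - N) * (X : PowerSeries R)^((Nat.dist k N)^2) * (P1 * P2)
      = tC ((k:ℤ) - N) * (-((X : PowerSeries R)^((Nat.dist k N)^2) * (P1 - 1) * P2)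
          - (X : PowerSeries R)^((Nat.dist k N)^2) * (P2 - 1)) := by
    ring
  rw [hdiff]
  apply Dvd.dvd.mul_left
  apply dvd_sub
  · apply dvd_neg.mpr
    have h1 : (X : PowerSeries R)^(2*(2*N-k)+2) ∣ P1 - 1 := by
      apply X_pow_dvd_prod_sub_one
      intro i hi
      rw [Finset.mem_range] at hi
      have : (1 : PowerSeries R) - (X : PowerSeries R)^(2*(2*N-i)) - 1 = -(X : PowerSeries R)^(2*(2*N-i)) := by ring
      rw [this]
      apply dvd_neg.mpr
      apply pow_dvd_pow
      omega
    have : (X : PowerSeries R)^(2*N+1) ∣ (X : PowerSeries R)^((Nat.dist k N)^2) * (X : PowerSeries R)^(2*(2*N-k)+2) := by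
      rw [← pow_add]
      apply pow_dvd_pow
      exact ineq_a N k hk
    calc (X : PowerSeries R)^(2*N+1) ∣ (X : PowerSeries R)^((Nat.dist k N)^2) * (X : PowerSeries R)^(2*(2*N-k)+2) := this
      _ ∣ (X : PowerSeries R)^((Nat.dist k N)^2) * (P1 - 1) * P2 := by
          rw [mul_assoc]
          exact mul_dvd_mul_left _ (dvd_mul_of_dvd_left h1 P2)
  · have h2 : (X : PowerSeries R)^(2*k+2) ∣ P2 - 1 := by
      apply X_pow_dvd_prod_sub_one
      intro i hi
      rw [Finset.mem_Ico] at hi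
      have : (1 : PowerSeries R) - (X : PowerSeries R)^(2*(i+1)) - 1 = -(X : PowerSeries R)^(2*(i+1)) := by ring
      rw [this]
      apply dvd_neg.mpr
      apply pow_dvd_pow
      omega
    have : (X : PowerSeries R)^(2*N+1) ∣ (X : PowerSeries R)^((Nat.dist k N)^2) * (X : PowerSeries R)^(2*k+2) := by
      rw [← pow_add]
      apply pow_dvd_pow
      exact ineq_b N k
    exact this.trans (mul_dvd_mul_left _ h2)

lemma unit_fD (i : ℕ) : IsUnit ((1 : PowerSeries R) - (X : PowerSeries R)^(2*(i+1))) := by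
  rw [PowerSeries.isUnit_iff_constantCoeff]
  have : constantCoeff (1 - (X : PowerSeries R)^(2*(i+1))) = 1 := by
    rw [map_sub, map_one, map_pow, PowerSeries.constantCoeff_X, zero_pow (by omega), sub_zero]
  rw [this]
  exact isUnit_one

lemma fI_dvd (j : ℕ) :
    (X : PowerSeries R)^(j+1) ∣ Ring.inverse ((1 : PowerSeries R) - (X : PowerSeries R)^(2*(j+1))) - 1 := by
  have h := Ring.inverse_mul_cancel _ (unit_fD j)
  have : Ring.inverse ((1 : PowerSeries R) - (X : PowerSeries R)^(2*(j+1))) - 1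
      = Ring.inverse ((1 : PowerSeries R) - (X : PowerSeries R)^(2*(j+1))) * (X : PowerSeries R)^(2*(j+1)) := by
    linear_combination h
  rw [this]
  exact Dvd.dvd.mul_left (pow_dvd_pow _ (by omega)) _

lemma jfR_dvd (j : ℕ) : (X : PowerSeries R)^(j+1) ∣ jfR j - 1 := by
  have : jfR j - 1 = (tC 1 + tC (-1) + tC 1 * tC (-1) * (X : PowerSeries R)^(2*j+1)) * (X : PowerSeries R)^(2*j+1) := by
    rw [jfR]
    ring
  rw [this]
  exact Dvd.dvd.mul_left (pow_dvd_pow _ (by omega)) _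

theorem jacobi_triple_product :
    (∑' m : ℤ, (C (LaurentPolynomial.T m : R)) * (X : PowerSeries R) ^ (m ^ 2).toNat) *
        ∏' j : ℕ, Ring.inverse (1 - (X : PowerSeries R) ^ (2 * (j + 1))) =
      ∏' j : ℕ,
        ((1 + C (LaurentPolynomial.T 1 : R) * (X : PowerSeries R) ^ (2 * j + 1)) *
          (1 + C (LaurentPolynomial.T (-1) : R) * (X : PowerSeries R) ^ (2 * j + 1))) := by
  have hjeq : (∑' m : ℤ, (C (LaurentPolynomial.T m : R)) * (X : PowerSeries R) ^ (m ^ 2).toNat)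
      = ∑' m : ℤ, jterm m := rfl
  have hfeq : (∏' j : ℕ,
        ((1 + C (LaurentPolynomial.T 1 : R) * (X : PowerSeries R) ^ (2 * j + 1)) *
          (1 + C (LaurentPolynomial.T (-1) : R) * (X : PowerSeries R) ^ (2 * j + 1))))
      = ∏' j : ℕ, jfR j := rfl
  rw [hjeq, hfeq]
  apply PowerSeries.ext
  intro d
  set N := d + 1 with hN
  set S : PowerSeries R := ∑' m : ℤ, jterm m with hS
  set P : PowerSeries R := ∏' j : ℕ, Ring.inverse (1 - (X : PowerSeries R) ^ (2 * (j + 1))) with hP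
  set u : PowerSeries R := ∑ m ∈ Finset.Icc (-(N:ℤ)) (N:ℤ), jterm m with hu
  set v : PowerSeries R := ∏ i ∈ Finset.range (2*N), Ring.inverse (1 - (X : PowerSeries R)^(2*(i+1))) with hv
  set D : PowerSeries R := ∏ i ∈ Finset.range (2*N), (1 - (X : PowerSeries R)^(2*(i+1))) with hD
  set Pfr : PowerSeries R := ∏ j ∈ Finset.range N, jfR j with hPfr
  have hSu : (X : PowerSeries R)^(d+1) ∣ S - u := by
    rw [PowerSeries.X_pow_dvd_iff]
    intro i hi
    rw [map_sub, hS, hu, coeff_jtsum (show i ≤ N by omega), sub_self]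
  have hPv : (X : PowerSeries R)^(d+1) ∣ P - v := by
    rw [PowerSeries.X_pow_dvd_iff]
    intro i hi
    rw [map_sub, hP, hv, coeff_tprod fI_dvd (show i < 2*N by omega), sub_self]
  have hvD : v * D = 1 := by
    rw [hv, hD, ← Finset.prod_mul_distrib]
    apply Finset.prod_eq_one
    intro i _
    exact Ring.inverse_mul_cancel _ (unit_fD i)
  have hkey : (X : PowerSeries R)^(d+1) ∣ u - Pfr * D := by
    apply dvd_trans (pow_dvd_pow (X : PowerSeries R) (show d+1 ≤ 2*N+1 by omega))
    exact key_congruence N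
  have hQ : coeff d (∏' j : ℕ, jfR j) = coeff d Pfr :=
    coeff_tprod jfR_dvd (by omega)
  rw [hQ]
  apply coeff_eq_of_sub_dvd
  have decomp : S * P - Pfr = (S - u) * P + u * (P - v) + (u - Pfr * D) * v := by
    linear_combination Pfr * hvD
  rw [decomp]
  exact dvd_add (dvd_add (hSu.mul_right _) (hPv.mul_left _)) (hkey.mul_right _)
end
end

section
/- The following formal power series identity holds: ∏_{i≥1} (1-q^i) / ((1 - t q^{i-1/2})(1 - t^{-1} q^{i-1/2})) = ∑_{j,k ≥ 0} [q^{k/2} t^k / ((1-q)⋯(1-q^k))] · q^{jk} · [q^{j/2} t^{-j} / ((1-q)⋯(1-q^j))], where empty products equal 1. -/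
/-!
STATEMENT 1: The formal power series identity
∏_{i≥1} (1-q^i) / ((1 - t q^{i-1/2})(1 - t^{-1} q^{i-1/2}))
  = ∑_{j,k ≥ 0} [q^{k/2} t^k / ((1-q)⋯(1-q^k))] · q^{jk} · [q^{j/2} t^{-j} / ((1-q)⋯(1-q^j))],
with empty products equal to 1.  We work in `PowerSeries R` with
`R = LaurentPolynomial ℚ` (Laurent polynomials in `t`); the power series
variable `X` plays the role of `q^{1/2}` (so `q^i = X^(2i)`), and
`(1-q)⋯(1-q^m) = ∏_{i=1}^m (1-q^i)`.  Division is expressed via `Ring.inverse`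
(all the denominators are units, having constant term 1), and the infinite
product/sum are taken in the product (coefficientwise discrete) topology.
-/

open PowerSeries

noncomputable section

/-!
Put `a = t q^{1/2}` and `b = t⁻¹ q^{1/2}`, so that `ab = q`. Summing over `k` first, Euler's series
`∑ z^k / (q;q)_k = 1 / (z;q)_∞` at `z = q^j a` gives `(a;q)_j / (a;q)_∞`, and what is left is
Cauchy's `q`-binomial series `∑ (a;q)_j b^j / (q;q)_j = (ab;q)_∞ / (b;q)_∞ = (q;q)_∞ / (b;q)_∞`.
Euler's series is the case `a = 0` of the `q`-binomial series, and the `q`-binomial theorem follows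
from the functional equation `(1 - z) F(z) = (1 - az) F(qz)` of `F(z) = ∑ (a;q)_k z^k / (q;q)_k`,
iterated towards `z = 0`, where `F(0) = 1`. Everything converges `X`-adically, since `a`, `b` and
`q` are divisible by `X = q^{1/2}`.
-/

open Finset Filter Topology
open scoped PowerSeries.WithPiTopology

theorem tendsto_fst_add_snd_cofinite_atTop :
    Tendsto (fun p : ℕ × ℕ => p.1 + p.2) cofinite atTop := by
  rw [← coprod_cofinite, Nat.cofinite_eq_atTop, Filter.coprod, tendsto_sup]
  exact ⟨tendsto_atTop_mono (fun p => Nat.le_add_right _ _) tendsto_comap,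
    tendsto_atTop_mono (fun p => Nat.le_add_left _ _) tendsto_comap⟩

section XAdic

variable {A : Type*} [CommRing A]

theorem isUnit_one_sub_of_X_dvd {w : A⟦X⟧} (hw : X ∣ w) : IsUnit (1 - w) := by
  rw [isUnit_iff_constantCoeff, map_sub, map_one, X_dvd_iff.mp hw, sub_zero]
  exact isUnit_one

variable [TopologicalSpace A]

theorem tendsto_of_X_pow_dvd_sub {ι : Type*} {l : Filter ι} {f : ι → A⟦X⟧} {g : A⟦X⟧}
    (h : ∀ n, ∀ᶠ i in l, X ^ n ∣ f i - g) : Tendsto f l (𝓝 g) := by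
  refine (WithPiTopology.tendsto_iff_coeff_tendsto _ _ _ _).mpr fun d =>
    tendsto_const_nhds.congr' ?_
  filter_upwards [h (d + 1)] with i hi
  have := X_pow_dvd_iff.mp hi d d.lt_succ_self
  rw [map_sub, sub_eq_zero] at this
  exact this.symm

theorem summable_of_X_pow_dvd {ι : Type*} {f : ι → A⟦X⟧} {d : ι → ℕ}
    (hd : Tendsto d cofinite atTop) (hf : ∀ i, X ^ d i ∣ f i) : Summable f := by
  refine (WithPiTopology.summable_iff_summable_coeff _).mpr fun n =>
    summable_of_hasFiniteSupport ?_
  refine Set.Finite.subset (hd.eventually (eventually_gt_atTop n)) fun i hi hlt => ?_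
  exact hi (X_pow_dvd_iff.mp (hf i) n hlt)

theorem multipliable_of_X_pow_dvd_sub_one {f : ℕ → A⟦X⟧} (hf : ∀ i, X ^ i ∣ f i - 1) :
    Multipliable f := by
  have : Multipliable fun i => 1 + (f i - 1) :=
    WithPiTopology.multipliable_one_add_of_tendsto_order_atTop_nhds_top _ <|
      ENat.tendsto_nhds_top_iff_natCast_lt.mpr fun n => eventually_atTop.mpr ⟨n + 1, fun i hi =>
        (Nat.cast_lt.mpr hi).trans_le (nat_le_order _ _ (X_pow_dvd_iff.mp (hf i)))⟩
  simpa using this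

variable [T2Space A]

theorem hasProd_of_eq_mul_succ {G Φ : ℕ → A⟦X⟧} (hΦ : ∀ r, Φ r = G r * Φ (r + 1))
    (hΦ1 : ∀ r, X ^ r ∣ Φ r - 1) (hG1 : ∀ i, X ^ i ∣ G i - 1) : HasProd G (Φ 0) := by
  have hpartial : ∀ r, Φ 0 = (∏ i ∈ range r, G i) * Φ r := by
    intro r
    induction r with
    | zero => simp
    | succ r ih => rw [ih, hΦ r, prod_range_succ, mul_assoc]
  refine (multipliable_of_X_pow_dvd_sub_one hG1).hasProd_iff_tendsto_nat.mpr
    (tendsto_of_X_pow_dvd_sub fun n => ?_)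
  filter_upwards [eventually_ge_atTop n] with r hr
  rw [hpartial r, show ∀ P : A⟦X⟧, P - P * Φ r = -(P * (Φ r - 1)) from fun P => by ring]
  exact (((pow_dvd_pow X hr).trans (hΦ1 r)).mul_left _).neg_right

end XAdic

theorem Summable.one_sub_mul_tsum {α : Type*} [CommRing α] [TopologicalSpace α]
    [IsTopologicalRing α] [T2Space α] {u : ℕ → α} (hu : Summable u) (z : α) :
    (1 - z) * ∑' k, u k = u 0 + ∑' k, (u (k + 1) - z * u k) := by
  have hshift : Summable fun k => u (k + 1) := (summable_nat_add_iff 1).mpr hu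
  rw [hshift.tsum_sub (hu.mul_left z), hu.tsum_mul_left, sub_mul, one_mul, hu.tsum_eq_zero_add,
    add_sub_assoc]

section QSeries

variable {A : Type*} [CommRing A]

def qFactorial (q : A⟦X⟧) (k : ℕ) : A⟦X⟧ := ∏ i ∈ range k, (1 - q ^ (i + 1))

def qPochhammer (q z : A⟦X⟧) (k : ℕ) : A⟦X⟧ := ∏ i ∈ range k, (1 - q ^ i * z)

def qBinomialTerm (q b z : A⟦X⟧) (k : ℕ) : A⟦X⟧ :=
  qPochhammer q b k * z ^ k * Ring.inverse (qFactorial q k)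

theorem inverse_qFactorial_succ_mul {q : A⟦X⟧} (hq : X ∣ q) (k : ℕ) :
    Ring.inverse (qFactorial q (k + 1)) * (1 - q ^ (k + 1)) = Ring.inverse (qFactorial q k) := by
  rw [qFactorial, prod_range_succ, Ring.mul_inverse_rev, mul_right_comm,
    Ring.inverse_mul_cancel _ (isUnit_one_sub_of_X_dvd (dvd_pow hq k.succ_ne_zero)), one_mul,
    qFactorial]

theorem qPochhammer_zero (q : A⟦X⟧) (k : ℕ) : qPochhammer q 0 k = 1 := by
  simp [qPochhammer]

theorem qBinomialTerm_zero (q b z : A⟦X⟧) : qBinomialTerm q b z 0 = 1 := by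
  simp [qBinomialTerm, qPochhammer, qFactorial]

theorem qBinomialTerm_succ_sub_mul {q : A⟦X⟧} (hq : X ∣ q) (b z : A⟦X⟧) (k : ℕ) :
    qBinomialTerm q b z (k + 1) - z * qBinomialTerm q b z k =
      qBinomialTerm q b (q * z) (k + 1) - b * z * qBinomialTerm q b (q * z) k := by
  simp only [qBinomialTerm, qPochhammer, prod_range_succ, mul_pow]
  linear_combination (∏ i ∈ range k, (1 - q ^ i * b)) * z ^ (k + 1) * (1 - q ^ k * b) *
    inverse_qFactorial_succ_mul hq k

theorem X_pow_dvd_qBinomialTerm (q b : A⟦X⟧) {z : A⟦X⟧} (hz : X ∣ z) (k : ℕ) :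
    X ^ k ∣ qBinomialTerm q b z k :=
  ((pow_dvd_pow_of_dvd hz k).mul_left _).mul_right _

variable [TopologicalSpace A]

def qBinomialSeries (q b z : A⟦X⟧) : A⟦X⟧ := ∑' k, qBinomialTerm q b z k

theorem summable_qBinomialTerm (q b : A⟦X⟧) {z : A⟦X⟧} (hz : X ∣ z) :
    Summable (qBinomialTerm q b z) :=
  summable_of_X_pow_dvd (Nat.cofinite_eq_atTop ▸ tendsto_id) (X_pow_dvd_qBinomialTerm q b hz)

variable [IsTopologicalRing A] [T2Space A]

theorem one_sub_mul_qBinomialSeries {q : A⟦X⟧} (hq : X ∣ q) (b : A⟦X⟧) {z : A⟦X⟧} (hz : X ∣ z) :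
    (1 - z) * qBinomialSeries q b z = (1 - b * z) * qBinomialSeries q b (q * z) := by
  rw [qBinomialSeries, qBinomialSeries, (summable_qBinomialTerm q b hz).one_sub_mul_tsum,
    (summable_qBinomialTerm q b (dvd_mul_of_dvd_left hq z)).one_sub_mul_tsum,
    qBinomialTerm_zero, qBinomialTerm_zero]
  simp_rw [qBinomialTerm_succ_sub_mul hq]

theorem dvd_qBinomialSeries_sub_one (q b : A⟦X⟧) {z : A⟦X⟧} (hz : X ∣ z) :
    z ∣ qBinomialSeries q b z - 1 := by
  have htail : Summable fun k => qPochhammer q b (k + 1) * z ^ k *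
      Ring.inverse (qFactorial q (k + 1)) :=
    summable_of_X_pow_dvd (Nat.cofinite_eq_atTop ▸ tendsto_id)
      fun k => ((pow_dvd_pow_of_dvd hz k).mul_left _).mul_right _
  refine ⟨∑' k, qPochhammer q b (k + 1) * z ^ k * Ring.inverse (qFactorial q (k + 1)), ?_⟩
  rw [qBinomialSeries, (summable_qBinomialTerm q b hz).tsum_eq_zero_add, qBinomialTerm_zero,
    add_sub_cancel_left, ← htail.tsum_mul_left]
  refine tsum_congr fun k => ?_
  rw [qBinomialTerm, pow_succ]
  ring

theorem hasProd_qBinomialSeries {q : A⟦X⟧} (hq : X ∣ q) (b : A⟦X⟧) {z : A⟦X⟧} (hz : X ∣ z) :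
    HasProd (fun i => (1 - b * (q ^ i * z)) * Ring.inverse (1 - q ^ i * z))
      (qBinomialSeries q b z) := by
  have hzi : ∀ i, X ∣ q ^ i * z := fun i => dvd_mul_of_dvd_right hz _
  have hXi : ∀ i, X ^ i ∣ q ^ i * z := fun i => dvd_mul_of_dvd_left (pow_dvd_pow_of_dvd hq i) _
  have hunit : ∀ i, Ring.inverse (1 - q ^ i * z) * (1 - q ^ i * z) = 1 := fun i =>
    Ring.inverse_mul_cancel _ (isUnit_one_sub_of_X_dvd (hzi i))
  have h := hasProd_of_eq_mul_succ (Φ := fun r => qBinomialSeries q b (q ^ r * z))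
    (G := fun i => (1 - b * (q ^ i * z)) * Ring.inverse (1 - q ^ i * z))
    (fun r => ?_) (fun r => (hXi r).trans (dvd_qBinomialSeries_sub_one q b (hzi r))) (fun i => ?_)
  · rwa [pow_zero, one_mul] at h
  · have hfun := one_sub_mul_qBinomialSeries hq b (hzi r)
    rw [← mul_assoc q, ← pow_succ'] at hfun
    linear_combination Ring.inverse (1 - q ^ r * z) * hfun -
      qBinomialSeries q b (q ^ r * z) * hunit r
  · refine (hXi i).trans ⟨Ring.inverse (1 - q ^ i * z) * (1 - b), ?_⟩
    linear_combination hunit i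

theorem qBinomialSeries_zero_pow_mul {q : A⟦X⟧} (hq : X ∣ q) {z : A⟦X⟧} (hz : X ∣ z) (k : ℕ) :
    qBinomialSeries q 0 (q ^ k * z) = qPochhammer q z k * qBinomialSeries q 0 z := by
  induction k with
  | zero => simp [qPochhammer]
  | succ k ih =>
    have h := one_sub_mul_qBinomialSeries hq 0 (dvd_mul_of_dvd_right hz (q ^ k))
    rw [zero_mul, sub_zero, one_mul, ← mul_assoc q, ← pow_succ'] at h
    rw [← h, ih, qPochhammer, qPochhammer, prod_range_succ]
    ring

end QSeries

section Bosonization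

variable {A : Type*} [CommRing A] [TopologicalSpace A] [IsTopologicalRing A] [T2Space A]

theorem tprod_eq_tsum_div_qFactorial_mul_qFactorial {a b : A⟦X⟧} (ha : X ∣ a) (hb : X ∣ b) :
    ∏' i, (1 - (a * b) ^ (i + 1)) * Ring.inverse (1 - (a * b) ^ i * a) *
        Ring.inverse (1 - (a * b) ^ i * b) =
      ∑' p : ℕ × ℕ, a ^ p.2 * Ring.inverse (qFactorial (a * b) p.2) * (a * b) ^ (p.1 * p.2) *
        (b ^ p.1 * Ring.inverse (qFactorial (a * b) p.1)) := by
  have hq : X ∣ a * b := dvd_mul_of_dvd_left ha b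
  have haj : ∀ j, X ∣ (a * b) ^ j * a := fun j => dvd_mul_of_dvd_right ha _
  have hterm : ∀ p : ℕ × ℕ, a ^ p.2 * Ring.inverse (qFactorial (a * b) p.2) *
      (a * b) ^ (p.1 * p.2) * (b ^ p.1 * Ring.inverse (qFactorial (a * b) p.1)) =
      b ^ p.1 * Ring.inverse (qFactorial (a * b) p.1) *
        qBinomialTerm (a * b) 0 ((a * b) ^ p.1 * a) p.2 := by
    rintro ⟨j, k⟩
    simp only [qBinomialTerm, qPochhammer_zero, mul_pow, ← pow_mul]
    ring
  have hsum : Summable fun p : ℕ × ℕ => b ^ p.1 * Ring.inverse (qFactorial (a * b) p.1) *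
      qBinomialTerm (a * b) 0 ((a * b) ^ p.1 * a) p.2 :=
    summable_of_X_pow_dvd tendsto_fst_add_snd_cofinite_atTop fun p => by
      rw [pow_add]
      exact mul_dvd_mul ((pow_dvd_pow_of_dvd hb _).mul_right _)
        (X_pow_dvd_qBinomialTerm _ _ (haj _) _)
  have hinner : ∀ j, ∑' k, b ^ j * Ring.inverse (qFactorial (a * b) j) *
      qBinomialTerm (a * b) 0 ((a * b) ^ j * a) k =
      qBinomialTerm (a * b) a b j * qBinomialSeries (a * b) 0 a := by
    intro j
    rw [(summable_qBinomialTerm _ 0 (haj j)).tsum_mul_left, ← qBinomialSeries,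
      qBinomialSeries_zero_pow_mul hq ha, qBinomialTerm]
    ring
  have hfib : ∀ j, Summable fun k => b ^ j * Ring.inverse (qFactorial (a * b) j) *
      qBinomialTerm (a * b) 0 ((a * b) ^ j * a) k := fun j =>
    (summable_qBinomialTerm _ 0 (haj j)).mul_left _
  rw [tsum_congr hterm, hsum.tsum_prod' hfib, tsum_congr hinner,
    (summable_qBinomialTerm _ a hb).tsum_mul_right]
  refine (tprod_congr fun i => ?_).trans
    ((hasProd_qBinomialSeries hq a hb).mul (hasProd_qBinomialSeries hq 0 ha)).tprod_eq
  ring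

end Bosonization

theorem symplectic_boson_q_identity :
    ∏' i : ℕ,
        ((1 - (X : PowerSeries R) ^ (2 * (i + 1))) *
          Ring.inverse (1 - C (R := R) (LaurentPolynomial.T 1) * (X : PowerSeries R) ^ (2 * i + 1)) *
          Ring.inverse (1 - C (R := R) (LaurentPolynomial.T (-1)) * (X : PowerSeries R) ^ (2 * i + 1))) =
      ∑' jk : ℕ × ℕ,
        ((X : PowerSeries R) ^ jk.2 * C (R := R) (LaurentPolynomial.T (jk.2 : ℤ)) *
            Ring.inverse (∏ i ∈ Finset.range jk.2, (1 - (X : PowerSeries R) ^ (2 * (i + 1)))) *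
          (X : PowerSeries R) ^ (2 * jk.1 * jk.2) *
          ((X : PowerSeries R) ^ jk.1 * C (R := R) (LaurentPolynomial.T (-(jk.1 : ℤ))) *
            Ring.inverse (∏ i ∈ Finset.range jk.1, (1 - (X : PowerSeries R) ^ (2 * (i + 1)))))) := by
  have : DiscreteTopology R := ⟨rfl⟩
  have key := tprod_eq_tsum_div_qFactorial_mul_qFactorial
    (dvd_mul_left X (C (LaurentPolynomial.T 1) : R⟦X⟧))
    (dvd_mul_left X (C (LaurentPolynomial.T (-1)) : R⟦X⟧))
  have hab : C (LaurentPolynomial.T 1) * X * (C (LaurentPolynomial.T (-1)) * X) =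
      (X : R⟦X⟧) ^ 2 := by
    rw [mul_mul_mul_comm, ← map_mul, ← LaurentPolynomial.T_add, add_neg_cancel,
      LaurentPolynomial.T_zero, map_one, one_mul, sq]
  rw [hab] at key
  refine (tprod_congr fun i => ?_).trans (key.trans (tsum_congr fun p => ?_))
  · ring_nf
  · simp only [qFactorial, ← pow_mul, mul_pow, ← map_pow, LaurentPolynomial.T_pow, mul_one,
      mul_neg]
    ring
end
end

section
/- The q-series identity ∏_{j ∈ 1/2 + ℤ_{≥0}} 1/(1-q^j) = ∏_{j ≥ 1, j odd} 1/(1-q^j) · ∏_{j ∈ 1/2 + ℤ_{≥0}} (1+q^j) holds as formal power series in q^{1/2}. -/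
/-!
STATEMENT 3: The q-series identity
∏_{j ∈ 1/2 + ℤ_{≥0}} 1/(1-q^j)
  = ∏_{j ≥ 1, j odd} 1/(1-q^j) · ∏_{j ∈ 1/2 + ℤ_{≥0}} (1+q^j)
as formal power series in `q^{1/2}`.  We work in `PowerSeries ℚ` whose variable
`X` plays the role of `q^{1/2}`: thus `q^{k+1/2} = X^(2k+1)` and, for odd
`j = 2j'+1`, `q^j = X^(2(2j'+1))`.  Inverses are `Ring.inverse` (each factor is
a unit with constant term 1) and the infinite products are taken in the
product (coefficientwise) topology.
-/

open PowerSeries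

noncomputable section

instance : TopologicalSpace (PowerSeries ℚ) :=
  inferInstanceAs (TopologicalSpace ((Unit →₀ ℕ) → ℚ))


lemma unit_one_sub (m : ℕ) (hm : 0 < m) : IsUnit (1 - (X : PowerSeries ℚ) ^ m) := by
  rw [PowerSeries.isUnit_iff_constantCoeff]
  simp [constantCoeff_X, zero_pow hm.ne', map_pow]

lemma inv_expand (m : ℕ) (hm : 0 < m) :
    Ring.inverse (1 - (X : PowerSeries ℚ) ^ m)
      = 1 + X ^ m * Ring.inverse (1 - (X : PowerSeries ℚ) ^ m) := by
  have h := Ring.mul_inverse_cancel _ (unit_one_sub m hm)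
  linear_combination h

/-- products of `1 + X^(n+1) * _` keep that shape -/
lemma prod_shape (n : ℕ) (f : ℕ → PowerSeries ℚ) (S : Finset ℕ)
    (hf : ∀ k ∈ S, ∃ B, f k = 1 + (X : PowerSeries ℚ) ^ (n + 1) * B) :
    ∃ C, ∏ k ∈ S, f k = 1 + (X : PowerSeries ℚ) ^ (n + 1) * C := by
  classical
  induction S using Finset.induction with
  | empty => exact ⟨0, by simp⟩
  | @insert a s hx ih =>
    obtain ⟨B, hB⟩ := hf a (by simp)
    obtain ⟨C, hC⟩ := ih fun k hk => hf k (by simp [hk])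
    refine ⟨B + C + X ^ (n + 1) * B * C, ?_⟩
    rw [Finset.prod_insert hx, hB, hC]
    ring

/-- stabilization of coefficients -/
lemma coeff_stab (n : ℕ) (f : ℕ → PowerSeries ℚ)
    (hf : ∀ k, ∃ B, f k = 1 + (X : PowerSeries ℚ) ^ (k + 1) * B)
    (S : Finset ℕ) (hS : Finset.range (n + 1) ⊆ S) :
    (coeff n) (∏ k ∈ S, f k) = (coeff n) (∏ k ∈ Finset.range (n + 1), f k) := by
  classical
  have hsplit : ∏ k ∈ S, f k
      = (∏ k ∈ Finset.range (n + 1), f k) * ∏ k ∈ S \ Finset.range (n + 1), f k := by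
    rw [← Finset.prod_union (Finset.disjoint_sdiff)]
    congr 1
    rw [Finset.union_sdiff_of_subset hS]
  have hshape : ∀ k ∈ S \ Finset.range (n + 1), ∃ B,
      f k = 1 + (X : PowerSeries ℚ) ^ (n + 1) * B := by
    intro k hk
    simp only [Finset.mem_sdiff, Finset.mem_range, not_lt] at hk
    obtain ⟨B, hB⟩ := hf k
    refine ⟨X ^ (k - n) * B, ?_⟩
    rw [hB, ← mul_assoc, ← pow_add,
      show n + 1 + (k - n) = k + 1 by omega]
  obtain ⟨C, hC⟩ := prod_shape n f (S \ Finset.range (n + 1)) hshape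
  rw [hsplit, hC, mul_add, mul_one, map_add]
  have : (∏ k ∈ Finset.range (n + 1), f k) * ((X : PowerSeries ℚ) ^ (n + 1) * C)
      = X ^ (n + 1) * ((∏ k ∈ Finset.range (n + 1), f k) * C) := by ring
  rw [this, coeff_X_pow_mul', if_neg (by omega), add_zero]

/-- the limit -/
def limprod (f : ℕ → PowerSeries ℚ) : PowerSeries ℚ :=
  PowerSeries.mk fun n => (coeff n) (∏ k ∈ Finset.range (n + 1), f k)

lemma hasProd (f : ℕ → PowerSeries ℚ)
    (hf : ∀ k, ∃ B, f k = 1 + (X : PowerSeries ℚ) ^ (k + 1) * B) :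
    HasProd f (limprod f) := by
  rw [HasProd]
  have : Filter.Tendsto (fun S : Finset ℕ => ((∏ k ∈ S, f k : PowerSeries ℚ) :
      (Unit →₀ ℕ) → ℚ)) Filter.atTop (nhds (limprod f : (Unit →₀ ℕ) → ℚ)) := by
    refine tendsto_pi_nhds.mpr ?_
    intro d
    apply Filter.Tendsto.congr' (f₁ := fun _ => (limprod f : (Unit →₀ ℕ) → ℚ) d)
    · filter_upwards [Filter.eventually_ge_atTop (Finset.range (d () + 1))] with S hS
      have hd : d = Finsupp.single () (d ()) := Finsupp.unique_single d
      have h1 : ((∏ k ∈ S, f k : PowerSeries ℚ) : (Unit →₀ ℕ) → ℚ) d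
          = (coeff (d ())) (∏ k ∈ S, f k) := by
        rw [PowerSeries.coeff, MvPowerSeries.coeff_apply]; rw [← hd]
      have h2 : ((limprod f : PowerSeries ℚ) : (Unit →₀ ℕ) → ℚ) d
          = (coeff (d ())) (limprod f) := by
        rw [PowerSeries.coeff, MvPowerSeries.coeff_apply]; rw [← hd]
      rw [h1, h2, limprod, coeff_mk, coeff_stab _ f hf S hS]
    · exact tendsto_const_nhds
  exact this

lemma tprod_eq (f : ℕ → PowerSeries ℚ)
    (hf : ∀ k, ∃ B, f k = 1 + (X : PowerSeries ℚ) ^ (k + 1) * B) :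
    ∏' k, f k = limprod f := by
  haveI : T2Space (PowerSeries ℚ) := inferInstanceAs (T2Space ((Unit →₀ ℕ) → ℚ))
  exact (hasProd f hf).tprod_eq

lemma inv_shape (m k : ℕ) (hm : k + 1 ≤ m) :
    ∃ B, Ring.inverse (1 - (X : PowerSeries ℚ) ^ m) = 1 + (X : PowerSeries ℚ) ^ (k + 1) * B := by
  refine ⟨X ^ (m - (k + 1)) * Ring.inverse (1 - (X : PowerSeries ℚ) ^ m), ?_⟩
  conv_lhs => rw [inv_expand m (by omega)]
  rw [← mul_assoc, ← pow_add, show k + 1 + (m - (k + 1)) = m by omega]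


theorem type_c_q_identity :
    ∏' k : ℕ, Ring.inverse (1 - (X : PowerSeries ℚ) ^ (2 * k + 1)) =
      (∏' j : ℕ, Ring.inverse (1 - (X : PowerSeries ℚ) ^ (2 * (2 * j + 1)))) *
        ∏' k : ℕ, (1 + (X : PowerSeries ℚ) ^ (2 * k + 1)) := by
  set f : ℕ → PowerSeries ℚ := fun k => Ring.inverse (1 - (X : PowerSeries ℚ) ^ (2 * k + 1))
  set g : ℕ → PowerSeries ℚ := fun k => Ring.inverse (1 - (X : PowerSeries ℚ) ^ (2 * (2 * k + 1)))
  set h : ℕ → PowerSeries ℚ := fun k => 1 + (X : PowerSeries ℚ) ^ (2 * k + 1)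
  have hf : ∀ k, ∃ B, f k = 1 + (X : PowerSeries ℚ) ^ (k + 1) * B :=
    fun k => inv_shape _ k (by omega)
  have hg : ∀ k, ∃ B, g k = 1 + (X : PowerSeries ℚ) ^ (k + 1) * B :=
    fun k => inv_shape _ k (by omega)
  have hh : ∀ k, ∃ B, h k = 1 + (X : PowerSeries ℚ) ^ (k + 1) * B := by
    intro k
    refine ⟨X ^ k, ?_⟩
    simp only [h, ← pow_add]
    congr 2
    omega
  have key : ∀ k, f k = g k * h k := by
    intro k
    have ha : IsUnit (1 - (X : PowerSeries ℚ) ^ (2 * k + 1)) := unit_one_sub _ (by omega)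
    have hb : IsUnit (1 - (X : PowerSeries ℚ) ^ (2 * (2 * k + 1))) := unit_one_sub _ (by omega)
    have hsq : (1 - (X : PowerSeries ℚ) ^ (2 * (2 * k + 1)))
        = (1 - X ^ (2 * k + 1)) * (1 + X ^ (2 * k + 1)) := by
      rw [show 2 * (2 * k + 1) = (2 * k + 1) + (2 * k + 1) by ring, pow_add]
      ring
    calc f k = f k * ((1 - (X : PowerSeries ℚ) ^ (2 * (2 * k + 1))) * g k) := by
          rw [Ring.mul_inverse_cancel _ hb, mul_one]
      _ = (Ring.inverse (1 - (X : PowerSeries ℚ) ^ (2 * k + 1)) * (1 - X ^ (2 * k + 1)))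
            * ((1 + X ^ (2 * k + 1)) * g k) := by rw [hsq]; ring
      _ = g k * h k := by rw [Ring.inverse_mul_cancel _ ha]; ring
  rw [tprod_eq f hf, tprod_eq g hg, tprod_eq h hh]
  ext n
  have L : (coeff n) (limprod f)
      = (coeff n) ((∏ k ∈ Finset.range (n + 1), g k) * ∏ k ∈ Finset.range (n + 1), h k) := by
    rw [limprod, coeff_mk, ← Finset.prod_mul_distrib]
    congr 1
    exact Finset.prod_congr rfl fun k _ => key k
  rw [L, coeff_mul, coeff_mul]
  apply Finset.sum_congr rfl
  intro p hp
  rw [Finset.HasAntidiagonal.mem_antidiagonal] at hp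
  have h1 : (coeff p.1) (limprod g) = (coeff p.1) (∏ k ∈ Finset.range (n + 1), g k) := by
    rw [limprod, coeff_mk, coeff_stab p.1 g hg (Finset.range (n + 1))
      (Finset.range_subset_range.mpr (by omega))]
  have h2 : (coeff p.2) (limprod h) = (coeff p.2) (∏ k ∈ Finset.range (n + 1), h k) := by
    rw [limprod, coeff_mk, coeff_stab p.2 h hh (Finset.range (n + 1))
      (Finset.range_subset_range.mpr (by omega))]
  rw [h1, h2]
end
end

section
/- Let ḡ be the Lie algebra of ℤ×ℤ complex matrices (a_{ij}) with a_{ij} = 0 for |i-j| sufficiently large. Define ω on elementary matrices by ω(E_{ij}, E_{ji}) = 1 = -ω(E_{ji}, E_{ij}) if i ≤ 0 < j, and ω(E_{ij}, E_{kl}) = 0 otherwise, extended bilinearly. Then ω is a 2-cocycle on ḡ: it is bilinear, skew-symmetric on the spanning pairs, and satisfies ω([a,b],c) + ω([b,c],a) + ω([c,a],b) = 0 for all a,b,c in the span of finitely many elementary matrices. -/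
/-!
STATEMENT 10: Let `ḡ = ā_∞` be the Lie algebra of `ℤ×ℤ` complex matrices with
finitely many nonzero diagonals, with bracket `[a,b] = ab - ba`.  Define `ω`
on elementary matrices by `ω(E_{ij}, E_{ji}) = 1 = -ω(E_{ji}, E_{ij})` if
`i ≤ 0 < j` and `ω(E_{ij}, E_{kl}) = 0` otherwise, extended bilinearly, i.e.
`ω(A,B) = ∑_{i≤0<j} (A_{ij} B_{ji} - A_{ji} B_{ij})`.  Then `ω` is a
2-cocycle: it is bilinear, takes the stated values (in particular is
skew-symmetric) on the spanning pairs of elementary matrices, and satisfies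
`ω([a,b],c) + ω([b,c],a) + ω([c,a],b) = 0` for all `a,b,c` in the span of
finitely many elementary matrices, i.e. for all finitely supported matrices.
Matrices are represented as functions `ℤ → ℤ → ℂ`; sums are finite sums
(`finsum`) over the (finite) supports.
-/

noncomputable section

def infMul (A B : ℤ → ℤ → ℂ) : ℤ → ℤ → ℂ := fun i k => ∑ᶠ j, A i j * B j k

def infBracket (A B : ℤ → ℤ → ℂ) : ℤ → ℤ → ℂ :=
  fun i k => infMul A B i k - infMul B A i k

def Eunit (i j : ℤ) : ℤ → ℤ → ℂ := fun p q => if p = i ∧ q = j then 1 else 0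

def om (A B : ℤ → ℤ → ℂ) : ℂ :=
  ∑ᶠ p : ℤ × ℤ,
    if p.1 ≤ 0 ∧ 0 < p.2 then A p.1 p.2 * B p.2 p.1 - A p.2 p.1 * B p.1 p.2 else 0

def FinSupp (A : ℤ → ℤ → ℂ) : Prop := {p : ℤ × ℤ | A p.1 p.2 ≠ 0}.Finite

def memIn (s : Finset ℤ) (A : ℤ → ℤ → ℂ) : Prop :=
  ∀ i j : ℤ, A i j ≠ 0 → i ∈ s ∧ j ∈ s

lemma memIn_mono {s t : Finset ℤ} {A : ℤ → ℤ → ℂ} (h : s ⊆ t) (hA : memIn s A) :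
    memIn t A := fun i j hij => ⟨h (hA i j hij).1, h (hA i j hij).2⟩

lemma finSupp_memIn {A : ℤ → ℤ → ℂ} (hA : FinSupp A) : ∃ s : Finset ℤ, memIn s A := by
  refine ⟨hA.toFinset.image Prod.fst ∪ hA.toFinset.image Prod.snd, fun i j hij => ?_⟩
  have h : ((i, j) : ℤ × ℤ) ∈ hA.toFinset := by
    exact (Set.Finite.mem_toFinset hA).2 hij
  exact ⟨Finset.mem_union_left _ (Finset.mem_image.2 ⟨(i, j), h, rfl⟩),
    Finset.mem_union_right _ (Finset.mem_image.2 ⟨(i, j), h, rfl⟩)⟩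

lemma infMul_eq {s : Finset ℤ} {A : ℤ → ℤ → ℂ} (hA : memIn s A) (B : ℤ → ℤ → ℂ)
    (i k : ℤ) : infMul A B i k = ∑ j ∈ s, A i j * B j k := by
  apply finsum_eq_finset_sum_of_support_subset
  intro j hj
  simp only [Function.mem_support] at hj
  exact Finset.mem_coe.mpr (hA i j (left_ne_zero_of_mul hj)).2

lemma memIn_mul {s : Finset ℤ} {A B : ℤ → ℤ → ℂ} (hA : memIn s A) (hB : memIn s B) :
    memIn s (infMul A B) := by
  intro i k h
  have hx : ∃ j, A i j * B j k ≠ 0 := by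
    by_contra hc
    push_neg at hc
    exact h (finsum_eq_zero_of_forall_eq_zero hc)
  obtain ⟨j, hj⟩ := hx
  exact ⟨(hA i j (left_ne_zero_of_mul hj)).1, (hB j k (right_ne_zero_of_mul hj)).2⟩

lemma memIn_bracket {s : Finset ℤ} {A B : ℤ → ℤ → ℂ} (hA : memIn s A) (hB : memIn s B) :
    memIn s (infBracket A B) := by
  intro i k h
  by_cases h1 : infMul A B i k ≠ 0
  · exact memIn_mul hA hB i k h1
  · push_neg at h1
    have h2 : infMul B A i k ≠ 0 := by
      intro h2
      exact h (by simp [infBracket, h1, h2])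
    exact memIn_mul hB hA i k h2

def M3 (s : Finset ℤ) (X Y Z : ℤ → ℤ → ℂ) (i k : ℤ) : ℂ :=
  ∑ m ∈ s, ∑ n ∈ s, X i m * Y m n * Z n k

lemma mul_bracket_left {s : Finset ℤ} {X Y : ℤ → ℤ → ℂ} (hX : memIn s X)
    (hY : memIn s Y) (Z : ℤ → ℤ → ℂ) (i k : ℤ) :
    infMul (infBracket X Y) Z i k = M3 s X Y Z i k - M3 s Y X Z i k := by
  rw [infMul_eq (memIn_bracket hX hY)]
  have h : ∀ m ∈ s, infBracket X Y i m * Z m k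
      = (∑ n ∈ s, X i n * Y n m * Z m k) - ∑ n ∈ s, Y i n * X n m * Z m k := by
    intro m _
    rw [infBracket, infMul_eq hX, infMul_eq hY, sub_mul, Finset.sum_mul, Finset.sum_mul]
  rw [Finset.sum_congr rfl h, Finset.sum_sub_distrib]
  simp only [M3]
  congr 1
  · exact Finset.sum_comm
  · exact Finset.sum_comm

lemma mul_bracket_right {s : Finset ℤ} {X Y Z : ℤ → ℤ → ℂ} (hZ : memIn s Z)
    (hX : memIn s X) (hY : memIn s Y) (i k : ℤ) :
    infMul Z (infBracket X Y) i k = M3 s Z X Y i k - M3 s Z Y X i k := by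
  rw [infMul_eq hZ]
  have h : ∀ m ∈ s, Z i m * infBracket X Y m k
      = (∑ n ∈ s, Z i m * X m n * Y n k) - ∑ n ∈ s, Z i m * Y m n * X n k := by
    intro m _
    rw [infBracket, infMul_eq hX, infMul_eq hY, mul_sub, Finset.mul_sum, Finset.mul_sum]
    simp [mul_assoc]
  rw [Finset.sum_congr rfl h, Finset.sum_sub_distrib]
  rfl

lemma jacobi {s : Finset ℤ} {A B C : ℤ → ℤ → ℂ} (hA : memIn s A) (hB : memIn s B)
    (hC : memIn s C) (i k : ℤ) :
    infBracket (infBracket A B) C i k + infBracket (infBracket B C) A i k +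
      infBracket (infBracket C A) B i k = 0 := by
  have e1 : infBracket (infBracket A B) C i k
      = (M3 s A B C i k - M3 s B A C i k) - (M3 s C A B i k - M3 s C B A i k) := by
    show infMul (infBracket A B) C i k - infMul C (infBracket A B) i k = _
    rw [mul_bracket_left hA hB, mul_bracket_right hC hA hB]
  have e2 : infBracket (infBracket B C) A i k
      = (M3 s B C A i k - M3 s C B A i k) - (M3 s A B C i k - M3 s A C B i k) := by
    show infMul (infBracket B C) A i k - infMul A (infBracket B C) i k = _
    rw [mul_bracket_left hB hC, mul_bracket_right hA hB hC]
  have e3 : infBracket (infBracket C A) B i k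
      = (M3 s C A B i k - M3 s A C B i k) - (M3 s B C A i k - M3 s B A C i k) := by
    show infMul (infBracket C A) B i k - infMul B (infBracket C A) i k = _
    rw [mul_bracket_left hC hA, mul_bracket_right hB hC hA]
  rw [e1, e2, e3]; ring

lemma om_eq_sum {s : Finset ℤ} {A : ℤ → ℤ → ℂ} (hA : memIn s A) (B : ℤ → ℤ → ℂ) :
    om A B = ∑ p ∈ s ×ˢ s,
      (if p.1 ≤ 0 ∧ 0 < p.2 then A p.1 p.2 * B p.2 p.1 - A p.2 p.1 * B p.1 p.2 else 0) := by
  apply finsum_eq_finset_sum_of_support_subset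
  intro p hp
  simp only [Function.mem_support] at hp
  have h1 : A p.1 p.2 ≠ 0 ∨ A p.2 p.1 ≠ 0 := by
    by_contra hc
    push_neg at hc
    exact hp (by simp [hc.1, hc.2])
  rcases h1 with h | h
  · exact Finset.mem_coe.mpr (Finset.mem_product.mpr ⟨(hA _ _ h).1, (hA _ _ h).2⟩)
  · exact Finset.mem_coe.mpr (Finset.mem_product.mpr ⟨(hA _ _ h).2, (hA _ _ h).1⟩)

lemma om_eq_tr {s : Finset ℤ} {A B : ℤ → ℤ → ℂ} (hA : memIn s A) (hB : memIn s B) :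
    om A B = ∑ i ∈ s.filter (· ≤ 0), infBracket A B i i := by
  rw [om_eq_sum hA]
  have hrhs : ∀ i ∈ s.filter (· ≤ 0), infBracket A B i i
      = ∑ j ∈ s, (A i j * B j i - B i j * A j i) := by
    intro i _
    rw [infBracket, infMul_eq hA, infMul_eq hB, ← Finset.sum_sub_distrib]
  rw [Finset.sum_congr rfl hrhs]
  have hsplit : ∀ i ∈ s.filter (· ≤ 0),
      (∑ j ∈ s, (A i j * B j i - B i j * A j i))
      = (∑ j ∈ s.filter (fun j => 0 < j), (A i j * B j i - B i j * A j i))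
        + ∑ j ∈ s.filter (fun j => ¬0 < j), (A i j * B j i - B i j * A j i) := by
    intro i _
    exact (Finset.sum_filter_add_sum_filter_not s _ _).symm
  rw [Finset.sum_congr rfl hsplit, Finset.sum_add_distrib]
  have hts : s.filter (fun j => ¬0 < j) = s.filter (· ≤ 0) := by
    apply Finset.filter_congr
    intro x _
    simp [not_lt]
  rw [hts]
  have hzero : (∑ i ∈ s.filter (· ≤ 0), ∑ j ∈ s.filter (· ≤ 0),
      (A i j * B j i - B i j * A j i)) = 0 := by
    have h2 : (∑ i ∈ s.filter (· ≤ 0), ∑ j ∈ s.filter (· ≤ 0),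
        (A i j * B j i - B i j * A j i))
        + (∑ i ∈ s.filter (· ≤ 0), ∑ j ∈ s.filter (· ≤ 0),
        (A i j * B j i - B i j * A j i)) = 0 := by
      nth_rewrite 2 [Finset.sum_comm]
      rw [← Finset.sum_add_distrib]
      refine Finset.sum_eq_zero fun i _ => ?_
      rw [← Finset.sum_add_distrib]
      refine Finset.sum_eq_zero fun j _ => ?_
      ring
    exact add_self_eq_zero.mp h2
  rw [hzero, add_zero]
  rw [← Finset.sum_product', ← Finset.filter_product, ← Finset.sum_filter]
  exact Finset.sum_congr rfl fun p _ => by ring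

lemma memIn_add {s : Finset ℤ} {A B : ℤ → ℤ → ℂ} (hA : memIn s A) (hB : memIn s B) :
    memIn s (fun i j => A i j + B i j) := by
  intro i k h
  by_cases h1 : A i k = 0
  · have h2 : B i k ≠ 0 := fun h2 => h (by simp [h1, h2])
    exact hB i k h2
  · exact hA i k h1

lemma memIn_smul {s : Finset ℤ} {A : ℤ → ℤ → ℂ} (c : ℂ) (hA : memIn s A) :
    memIn s (fun i j => c * A i j) := by
  intro i k h
  exact hA i k (right_ne_zero_of_mul h)

theorem om_is_a_two_cocycle :
    (∀ A B C : ℤ → ℤ → ℂ, FinSupp A → FinSupp B → FinSupp C →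
      om (fun i j => A i j + B i j) C = om A C + om B C ∧
      om C (fun i j => A i j + B i j) = om C A + om C B) ∧
    (∀ (c : ℂ) (A B : ℤ → ℤ → ℂ), FinSupp A → FinSupp B →
      om (fun i j => c * A i j) B = c * om A B ∧
      om A (fun i j => c * B i j) = c * om A B) ∧
    (∀ i j : ℤ, i ≤ 0 → 0 < j →
      om (Eunit i j) (Eunit j i) = 1 ∧ om (Eunit j i) (Eunit i j) = -1) ∧
    (∀ i j k l : ℤ,
      ¬((k = j ∧ l = i) ∧ ((i ≤ 0 ∧ 0 < j) ∨ (j ≤ 0 ∧ 0 < i))) →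
      om (Eunit i j) (Eunit k l) = 0) ∧
    (∀ A B C : ℤ → ℤ → ℂ, FinSupp A → FinSupp B → FinSupp C →
      om (infBracket A B) C + om (infBracket B C) A + om (infBracket C A) B = 0) := by
  refine ⟨?_, ?_, ?_, ?_, ?_⟩
  · -- additivity
    intro A B C hA hB hC
    obtain ⟨sa, ha⟩ := finSupp_memIn hA
    obtain ⟨sb, hb⟩ := finSupp_memIn hB
    obtain ⟨sc, hc⟩ := finSupp_memIn hC
    set s := sa ∪ sb ∪ sc with hs
    have hA' : memIn s A := memIn_mono (by intro x hx; simp [hs, Finset.mem_union]; tauto) ha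
    have hB' : memIn s B := memIn_mono (by intro x hx; simp [hs, Finset.mem_union]; tauto) hb
    have hC' : memIn s C := memIn_mono (by intro x hx; simp [hs, Finset.mem_union]; tauto) hc
    constructor
    · rw [om_eq_sum (memIn_add hA' hB') C, om_eq_sum hA' C, om_eq_sum hB' C,
        ← Finset.sum_add_distrib]
      refine Finset.sum_congr rfl fun p _ => ?_
      by_cases h : p.1 ≤ 0 ∧ 0 < p.2 <;> simp [h] <;> ring
    · rw [om_eq_sum hC' (fun i j => A i j + B i j), om_eq_sum hC' A, om_eq_sum hC' B,
        ← Finset.sum_add_distrib]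
      refine Finset.sum_congr rfl fun p _ => ?_
      by_cases h : p.1 ≤ 0 ∧ 0 < p.2 <;> simp [h] <;> ring
  · -- scalar
    intro c A B hA hB
    obtain ⟨sa, ha⟩ := finSupp_memIn hA
    obtain ⟨sb, hb⟩ := finSupp_memIn hB
    set s := sa ∪ sb with hs
    have hA' : memIn s A := memIn_mono Finset.subset_union_left ha
    have hB' : memIn s B := memIn_mono Finset.subset_union_right hb
    constructor
    · rw [om_eq_sum (memIn_smul c hA') B, om_eq_sum hA' B, Finset.mul_sum]
      refine Finset.sum_congr rfl fun p _ => ?_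
      by_cases h : p.1 ≤ 0 ∧ 0 < p.2 <;> simp [h] <;> ring
    · rw [om_eq_sum hA' (fun i j => c * B i j), om_eq_sum hA' B, Finset.mul_sum]
      refine Finset.sum_congr rfl fun p _ => ?_
      by_cases h : p.1 ≤ 0 ∧ 0 < p.2 <;> simp [h] <;> ring
  · -- values on E_{ij}, E_{ji}
    intro i j hi hj
    have hij : i ≠ j := by omega
    have hsupp : ∀ (X Y : ℤ → ℤ → ℂ), X = Eunit i j ∨ X = Eunit j i → True := fun _ _ _ => trivial
    constructor
    · rw [om]
      rw [finsum_eq_finset_sum_of_support_subset _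
        (s := ({(i, j), (j, i)} : Finset (ℤ × ℤ))) ?_]
      · rw [Finset.sum_pair (by simp [hij] : ((i, j) : ℤ × ℤ) ≠ (j, i))]
        simp only [Eunit]
        rw [if_pos ⟨hi, hj⟩, if_neg (by omega : ¬(j ≤ 0 ∧ 0 < i))]
        simp [hij, hij.symm]
      · intro p hp
        simp only [Function.mem_support] at hp
        simp only [Finset.coe_insert, Finset.coe_singleton, Set.mem_insert_iff,
          Set.mem_singleton_iff]
        by_contra hne
        push_neg at hne
        apply hp
        have h1 : ¬(p.1 = i ∧ p.2 = j) := by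
          rintro ⟨e1, e2⟩; exact hne.1 (Prod.ext e1 e2)
        have h2 : ¬(p.2 = i ∧ p.1 = j) := by
          rintro ⟨e1, e2⟩; exact hne.2 (Prod.ext e2 e1)
        have h1' : ¬(p.2 = j ∧ p.1 = i) := fun ⟨a, b⟩ => h1 ⟨b, a⟩
        have h2' : ¬(p.1 = j ∧ p.2 = i) := fun ⟨a, b⟩ => h2 ⟨b, a⟩
        simp [Eunit, h1, h2, h1', h2']
    · rw [om]
      rw [finsum_eq_finset_sum_of_support_subset _
        (s := ({(i, j), (j, i)} : Finset (ℤ × ℤ))) ?_]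
      · rw [Finset.sum_pair (by simp [hij] : ((i, j) : ℤ × ℤ) ≠ (j, i))]
        simp only [Eunit]
        rw [if_pos ⟨hi, hj⟩, if_neg (by omega : ¬(j ≤ 0 ∧ 0 < i))]
        simp [hij, hij.symm]
      · intro p hp
        simp only [Function.mem_support] at hp
        simp only [Finset.coe_insert, Finset.coe_singleton, Set.mem_insert_iff,
          Set.mem_singleton_iff]
        by_contra hne
        push_neg at hne
        apply hp
        have h1 : ¬(p.1 = i ∧ p.2 = j) := by
          rintro ⟨e1, e2⟩; exact hne.1 (Prod.ext e1 e2)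
        have h2 : ¬(p.2 = i ∧ p.1 = j) := by
          rintro ⟨e1, e2⟩; exact hne.2 (Prod.ext e2 e1)
        have h1' : ¬(p.2 = j ∧ p.1 = i) := fun ⟨a, b⟩ => h1 ⟨b, a⟩
        have h2' : ¬(p.1 = j ∧ p.2 = i) := fun ⟨a, b⟩ => h2 ⟨b, a⟩
        simp [Eunit, h1, h2, h1', h2']
  · -- vanishing values
    intro i j k l h
    rw [om]
    refine finsum_eq_zero_of_forall_eq_zero fun p => ?_
    by_cases hc : p.1 ≤ 0 ∧ 0 < p.2
    · rw [if_pos hc]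
      simp only [Eunit]
      split_ifs
      all_goals try ring
      all_goals (exfalso; omega)
    · rw [if_neg hc]
  · -- cocycle identity
    intro A B C hA hB hC
    obtain ⟨sa, ha⟩ := finSupp_memIn hA
    obtain ⟨sb, hb⟩ := finSupp_memIn hB
    obtain ⟨sc, hc⟩ := finSupp_memIn hC
    set s := sa ∪ sb ∪ sc with hs
    have hA' : memIn s A := memIn_mono (by intro x hx; simp [hs, Finset.mem_union]; tauto) ha
    have hB' : memIn s B := memIn_mono (by intro x hx; simp [hs, Finset.mem_union]; tauto) hb
    have hC' : memIn s C := memIn_mono (by intro x hx; simp [hs, Finset.mem_union]; tauto) hc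
    rw [om_eq_tr (memIn_bracket hA' hB') hC', om_eq_tr (memIn_bracket hB' hC') hA',
      om_eq_tr (memIn_bracket hC' hA') hB', ← Finset.sum_add_distrib,
      ← Finset.sum_add_distrib]
    exact Finset.sum_eq_zero fun i _ => jacobi hA' hB' hC' i i
end
end

section
/- Let λ = (λ_1,…,λ_s) be a partition of n and let ω_a = e^{2πi/λ_a}. Let N' = lcm(λ_1,…,λ_s). The order N of the automorphism exp(2πi ad h_w) of gl_n, where h_w = ∑_{a=1}^s ∑_{j=1}^{λ_a} ((λ_a - 2j + 1)/(2λ_a)) e^{aa}_{jj}, equals N' if N'(1/λ_a + 1/λ_b) ∈ 2ℤ for all 1 ≤ a,b ≤ s, and equals 2N' otherwise. -/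
/-!
STATEMENT 15: Let `λ = (λ_1,…,λ_s)` be a partition of `n` and
`h_w = ∑_{a,j} ((λ_a - 2j + 1)/(2λ_a)) e^{aa}_{jj}` the diagonal matrix with
entry `(λ_a - 2j + 1)/(2λ_a)` at the `j`-th place (`1 ≤ j ≤ λ_a`) of the
`a`-th block.  The automorphism `σ = exp(2πi ad h_w)` of `gl_n` multiplies the
matrix entry at `(p,q)` by `e^{2πi (h_w(p) - h_w(q))}`.  With
`N' = lcm(λ_1,…,λ_s)`, the order of `σ` equals `N'` if
`N'(1/λ_a + 1/λ_b) ∈ 2ℤ` for all `a,b` (i.e. `2 ∣ N'/λ_a + N'/λ_b`, the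
divisions being exact), and equals `2N'` otherwise.

We index `gl_n` by the blockwise index type `ι = Σ (a : Fin s), Fin (λ a)`
(so `n = ∑ λ_a`); `p.2 : Fin (λ a)` is 0-based, corresponding to
`j = p.2 + 1`.  The order of `σ` as an element of the monoid
`Function.End (Matrix ι ι ℂ)` is `orderOf σ`.
-/

noncomputable section

def hwFun (s : ℕ) (lam : Fin s → ℕ) (p : (a : Fin s) × Fin (lam a)) : ℂ :=
  ((lam p.1 : ℂ) - 2 * (p.2.val + 1) + 1) / (2 * (lam p.1 : ℂ))

def sigmaAut (s : ℕ) (lam : Fin s → ℕ) :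
    Function.End (Matrix ((a : Fin s) × Fin (lam a)) ((a : Fin s) × Fin (lam a)) ℂ) :=
  fun A => Matrix.of fun p q =>
    Complex.exp (2 * Real.pi * Complex.I * (hwFun s lam p - hwFun s lam q)) * A p q

namespace OrderOfExpAdHw

def rq (s : ℕ) (lam : Fin s → ℕ) (a : Fin s) (j : Fin (lam a)) : ℚ :=
  ((lam a : ℚ) - 2 * (j.val + 1) + 1) / (2 * (lam a : ℚ))

def P (s : ℕ) (lam : Fin s → ℕ) (k : ℕ) : Prop :=
  ∀ p q : (a : Fin s) × Fin (lam a),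
    ∃ n : ℤ, (k : ℚ) * (rq s lam p.1 p.2 - rq s lam q.1 q.2) = n

variable {s : ℕ} {lam : Fin s → ℕ}

lemma hwFun_eq (s : ℕ) (lam : Fin s → ℕ) (p : (a : Fin s) × Fin (lam a)) :
    hwFun s lam p = ((rq s lam p.1 p.2 : ℚ) : ℂ) := by
  unfold hwFun rq
  push_cast
  ring

lemma sigma_pow (s : ℕ) (lam : Fin s → ℕ) (k : ℕ)
    (A : Matrix ((a : Fin s) × Fin (lam a)) ((a : Fin s) × Fin (lam a)) ℂ) :
    (sigmaAut s lam ^ k) A = Matrix.of fun p q =>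
      Complex.exp (2 * Real.pi * Complex.I * (hwFun s lam p - hwFun s lam q)) ^ k * A p q := by
  induction k generalizing A with
  | zero =>
      ext p q
      simp [Matrix.of_apply]
      rfl
  | succ k ih =>
      rw [pow_succ]
      show (sigmaAut s lam ^ k) (sigmaAut s lam A) = _
      rw [ih]
      ext p q
      simp only [Matrix.of_apply, sigmaAut, pow_succ]
      ring

lemma cexp_pow_eq_one_iff (s : ℕ) (lam : Fin s → ℕ)
    (p q : (a : Fin s) × Fin (lam a)) (k : ℕ) :
    Complex.exp (2 * Real.pi * Complex.I * (hwFun s lam p - hwFun s lam q)) ^ k = 1 ↔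
      ∃ n : ℤ, (k : ℚ) * (rq s lam p.1 p.2 - rq s lam q.1 q.2) = n := by
  rw [← Complex.exp_nat_mul, Complex.exp_eq_one_iff]
  have h2 : (2 * (Real.pi : ℂ) * Complex.I) ≠ 0 := by
    simp [Real.pi_ne_zero, Complex.I_ne_zero]
  constructor
  · rintro ⟨n, hn⟩
    refine ⟨n, ?_⟩
    have key : (k : ℂ) * (hwFun s lam p - hwFun s lam q) = (n : ℂ) := by
      apply mul_left_cancel₀ h2
      linear_combination hn
    rw [hwFun_eq, hwFun_eq] at key
    exact_mod_cast key
  · rintro ⟨n, hn⟩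
    refine ⟨n, ?_⟩
    have key : (k : ℂ) * (hwFun s lam p - hwFun s lam q) = (n : ℂ) := by
      rw [hwFun_eq, hwFun_eq]
      exact_mod_cast hn
    linear_combination (2 * (Real.pi : ℂ) * Complex.I) * key

lemma pow_eq_one_iff (s : ℕ) (lam : Fin s → ℕ) (k : ℕ) :
    sigmaAut s lam ^ k = 1 ↔ P s lam k := by
  constructor
  · intro h p q
    have := congrFun h (Matrix.of fun _ _ => (1 : ℂ))
    rw [sigma_pow] at this
    have h2 := congrFun (congrFun this p) q
    simp only [Matrix.of_apply, mul_one, Function.End.one_def, id_eq] at h2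
    rw [← cexp_pow_eq_one_iff]
    exact h2
  · intro h
    funext A
    rw [sigma_pow]
    ext p q
    simp only [Matrix.of_apply]
    rw [(cexp_pow_eq_one_iff s lam p q k).2 (h p q), one_mul]
    rfl

lemma P_dvd (hpos : ∀ a, 0 < lam a) {k : ℕ} (h : P s lam k) (a : Fin s) :
    lam a ∣ k := by
  rcases Nat.lt_or_ge (lam a) 2 with h1 | h2
  · interval_cases h' : lam a
    · exact absurd (hpos a) (by omega)
    · simpa [h'] using Nat.one_dvd k
  · obtain ⟨n, hn⟩ := h ⟨a, ⟨0, hpos a⟩⟩ ⟨a, ⟨1, h2⟩⟩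
    have hla : ((lam a : ℚ)) ≠ 0 := by
      exact_mod_cast (hpos a).ne'
    have : (k : ℚ) = n * (lam a : ℚ) := by
      rw [rq, rq] at hn
      field_simp at hn
      push_cast at hn
      linarith [hn]
    have hz : (k : ℤ) = n * (lam a : ℤ) := by exact_mod_cast this
    have h3 : ((lam a : ℤ)) ∣ (k : ℤ) := ⟨n, by linarith [hz]⟩
    exact_mod_cast h3

lemma P_parity (hpos : ∀ a, 0 < lam a) {k : ℕ} (h : P s lam k) (a b : Fin s) :
    2 ∣ (k / lam a + k / lam b) := by
  obtain ⟨n, hn⟩ := h ⟨a, ⟨0, hpos a⟩⟩ ⟨b, ⟨0, hpos b⟩⟩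
  obtain ⟨u, hu⟩ := P_dvd hpos h a
  obtain ⟨v, hv⟩ := P_dvd hpos h b
  have hla : ((lam a : ℚ)) ≠ 0 := by exact_mod_cast (hpos a).ne'
  have hlb : ((lam b : ℚ)) ≠ 0 := by exact_mod_cast (hpos b).ne'
  have hku : (k : ℚ) = (lam a : ℚ) * u := by exact_mod_cast congrArg (Nat.cast : ℕ → ℚ) hu
  have hkv : (k : ℚ) = (lam b : ℚ) * v := by exact_mod_cast congrArg (Nat.cast : ℕ → ℚ) hv
  have key : (v : ℚ) - u = 2 * n := by
    have h0 : ((lam a : ℚ) * lam b) ≠ 0 := mul_ne_zero hla hlb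
    apply mul_left_cancel₀ h0
    rw [rq, rq] at hn
    field_simp at hn
    linear_combination hn - (lam a : ℚ) * hkv + (lam b : ℚ) * hku
  have keyz : (v : ℤ) - u = 2 * n := by exact_mod_cast key
  have h2 : 2 ∣ (u + v) := by omega
  have ea : k / lam a = u := by rw [hu]; exact Nat.mul_div_cancel_left u (hpos a)
  have eb : k / lam b = v := by rw [hv]; exact Nat.mul_div_cancel_left v (hpos b)
  rw [ea, eb]
  exact h2

lemma P_of (hpos : ∀ a, 0 < lam a) {k : ℕ}
    (hdvd : ∀ a, lam a ∣ k)
    (hpar : ∀ a b, 2 ∣ (k / lam a + k / lam b)) :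
    P s lam k := by
  rintro ⟨a, j⟩ ⟨b, l⟩
  set u := k / lam a with hu'
  set v := k / lam b with hv'
  have hu : k = lam a * u := (Nat.mul_div_cancel' (hdvd a)).symm
  have hv : k = lam b * v := (Nat.mul_div_cancel' (hdvd b)).symm
  have h2 : 2 ∣ (u + v) := hpar a b
  obtain ⟨t, ht⟩ : ∃ t : ℤ, (v : ℤ) - u = 2 * t := by
    obtain ⟨m, hm⟩ := h2
    exact ⟨(v : ℤ) - (m : ℤ), by omega⟩
  refine ⟨(v : ℤ) * (l.val + 1) - (u : ℤ) * (j.val + 1) - t, ?_⟩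
  have hla : ((lam a : ℚ)) ≠ 0 := by exact_mod_cast (hpos a).ne'
  have hlb : ((lam b : ℚ)) ≠ 0 := by exact_mod_cast (hpos b).ne'
  have hku : (k : ℚ) = (lam a : ℚ) * u := by exact_mod_cast congrArg (Nat.cast : ℕ → ℚ) hu
  have hkv : (k : ℚ) = (lam b : ℚ) * v := by exact_mod_cast congrArg (Nat.cast : ℕ → ℚ) hv
  have htq : (v : ℚ) - u = 2 * t := by exact_mod_cast ht
  rw [rq, rq]
  push_cast
  field_simp
  linear_combination (-2 * (j.val : ℚ) * (lam b : ℚ) - (lam b : ℚ)) * hku +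
    (2 * (l.val : ℚ) * (lam a : ℚ) + (lam a : ℚ)) * hkv -
    (lam a : ℚ) * (lam b : ℚ) * htq

lemma lcm_pos (hpos : ∀ a, 0 < lam a) : 0 < Finset.univ.lcm lam := by
  rcases Nat.eq_zero_or_pos (Finset.univ.lcm lam) with h | h
  · rw [Finset.lcm_eq_zero_iff] at h
    obtain ⟨a, _, ha⟩ := h
    exact absurd (hpos a) (by omega)
  · exact h

lemma div_helper (hpos : ∀ a, 0 < lam a) (a : Fin s) (m : ℕ) :
    (Finset.univ.lcm lam * m) / lam a = (Finset.univ.lcm lam / lam a) * m := by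
  obtain ⟨c, hc⟩ := Finset.dvd_lcm (f := lam) (Finset.mem_univ a)
  rw [hc, Nat.mul_div_cancel_left c (hpos a), mul_assoc,
    Nat.mul_div_cancel_left (c * m) (hpos a)]

lemma P_iff (hpos : ∀ a, 0 < lam a) (k : ℕ) :
    P s lam k ↔
      (if ∀ a b : Fin s,
          2 ∣ (Finset.univ.lcm lam / lam a + Finset.univ.lcm lam / lam b)
       then Finset.univ.lcm lam
       else 2 * Finset.univ.lcm lam) ∣ k := by
  set N' := Finset.univ.lcm lam with hN'
  constructor
  · intro h
    have hd : ∀ a, lam a ∣ k := fun a => P_dvd hpos h a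
    have hN'k : N' ∣ k := Finset.lcm_dvd (fun a _ => hd a)
    by_cases hC : ∀ a b : Fin s, 2 ∣ (N' / lam a + N' / lam b)
    · rw [if_pos hC]; exact hN'k
    · rw [if_neg hC]
      push_neg at hC
      obtain ⟨a, b, hab⟩ := hC
      obtain ⟨m, hm⟩ := hN'k
      have h2 := P_parity hpos h a b
      rw [hm, div_helper hpos a, div_helper hpos b, ← Nat.add_mul] at h2
      rcases (Nat.Prime.dvd_mul Nat.prime_two).1 h2 with h3 | h3
      · exact absurd h3 hab
      · obtain ⟨m', hm'⟩ := h3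
        exact ⟨m', by rw [hm, hm']; ring⟩
  · intro h
    have hN'k : N' ∣ k := by
      by_cases hC : ∀ a b : Fin s, 2 ∣ (N' / lam a + N' / lam b)
      · rwa [if_pos hC] at h
      · rw [if_neg hC] at h
        exact (dvd_mul_left N' 2).trans h
    have hdvd : ∀ a, lam a ∣ k :=
      fun a => (Finset.dvd_lcm (f := lam) (Finset.mem_univ a)).trans hN'k
    apply P_of hpos hdvd
    intro a b
    by_cases hC : ∀ a b : Fin s, 2 ∣ (N' / lam a + N' / lam b)
    · rw [if_pos hC] at h
      obtain ⟨m, hm⟩ := h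
      rw [hm, div_helper hpos a, div_helper hpos b, ← Nat.add_mul]
      exact Dvd.dvd.mul_right (hC a b) m
    · rw [if_neg hC] at h
      obtain ⟨m, hm⟩ := h
      have hm2 : k = N' * (2 * m) := by rw [hm]; ring
      rw [hm2, div_helper hpos a, div_helper hpos b, ← Nat.add_mul]
      exact ⟨(N' / lam a + N' / lam b) * m, by ring⟩

end OrderOfExpAdHw

theorem order_of_exp_ad_hw (s : ℕ) (lam : Fin s → ℕ) (hpos : ∀ a, 0 < lam a) :
    orderOf (sigmaAut s lam) =
      if ∀ a b : Fin s,
          2 ∣ (Finset.univ.lcm lam / lam a + Finset.univ.lcm lam / lam b)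
      then Finset.univ.lcm lam
      else 2 * Finset.univ.lcm lam := by
  open OrderOfExpAdHw in
  set N := if ∀ a b : Fin s,
      2 ∣ (Finset.univ.lcm lam / lam a + Finset.univ.lcm lam / lam b)
    then Finset.univ.lcm lam
    else 2 * Finset.univ.lcm lam with hN
  have hNpos : 0 < N := by
    have := OrderOfExpAdHw.lcm_pos hpos
    rw [hN]
    split <;> omega
  have h1 : sigmaAut s lam ^ N = 1 :=
    (OrderOfExpAdHw.pow_eq_one_iff s lam N).2
      ((OrderOfExpAdHw.P_iff hpos N).2 (hN ▸ dvd_rfl))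
  have h2 : orderOf (sigmaAut s lam) ∣ N := orderOf_dvd_of_pow_eq_one h1
  have h3 : N ∣ orderOf (sigmaAut s lam) := by
    rw [hN]
    exact (OrderOfExpAdHw.P_iff hpos _).1
      ((OrderOfExpAdHw.pow_eq_one_iff s lam _).1 (pow_orderOf_eq_one _))
  exact Nat.dvd_antisymm h2 h3
end
end
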